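/- arXiv:2312.16524 — 7 statements merged into one kernel-verified Lean document; each statement's English description precedes it below -/
import Mathlib

section
/- Fix a prime q and a real number x > 0. Then x can be written as a convergent series Σ_{i≥0} p_i / q^{n_i}, where each p_i is a prime different from q and (n_i) is a strictly increasing sequence of integers. -/
open Filter Finset

lemma key_step (q : ℕ) (hq : q.Prime) (y : ℝ) (hy : 0 < y) (m : ℤ) :
    ∃ (n : ℤ) (P : ℕ), m < n ∧ P.Prime ∧ P ≠ q ∧
      0 < y - (P : ℝ) / (q : ℝ) ^ n ∧ y - (P : ℝ) / (q : ℝ) ^ n < 3 / 4 * y := by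
  have hQ1 : (1 : ℝ) < q := by exact_mod_cast hq.one_lt
  have hQ0 : (0 : ℝ) < q := lt_trans one_pos hQ1
  obtain ⟨k, hk⟩ := pow_unbounded_of_one_lt (((2 * q + 16 : ℕ) : ℝ) / y) hQ1
  set n : ℤ := max (m + 1) (k : ℤ) with hn
  have hmn : m < n := lt_of_lt_of_le (lt_add_one m) (le_max_left _ _)
  have hw : (0 : ℝ) < (q : ℝ) ^ n := zpow_pos hQ0 n
  set z : ℝ := y * (q : ℝ) ^ n with hz
  have hzk : y * (q : ℝ) ^ k ≤ z := by
    have h1 : ((q : ℝ) ^ k : ℝ) = (q : ℝ) ^ (k : ℤ) := (zpow_natCast _ _).symm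
    have h2 : (q : ℝ) ^ (k : ℤ) ≤ (q : ℝ) ^ n :=
      zpow_le_zpow_right₀ hQ1.le (le_max_right _ _)
    rw [hz, h1]
    exact mul_le_mul_of_nonneg_left h2 hy.le
  have hzbig : ((2 * q + 16 : ℕ) : ℝ) ≤ z := by
    have : ((2 * q + 16 : ℕ) : ℝ) < y * (q : ℝ) ^ k := by
      rw [div_lt_iff₀ hy] at hk
      linarith [hk]
    linarith
  have hz0 : (0 : ℝ) < z := mul_pos hy hw
  set N : ℕ := ⌊z⌋₊ with hN
  have hNz : (N : ℝ) ≤ z := Nat.floor_le hz0.le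
  have hzN1 : z < N + 1 := Nat.lt_floor_add_one z
  have hNbig : 2 * q + 16 ≤ N := Nat.le_floor hzbig
  set M : ℕ := N / 2 - 1 with hM
  have hM0 : M ≠ 0 := by omega
  obtain ⟨P, hP, hMP, hP2M⟩ := Nat.exists_prime_lt_and_le_two_mul M hM0
  have hPN : P ≤ N - 2 := by omega
  have hPq : q < P := by omega
  have h2P : N - 1 ≤ 2 * P := by omega
  -- real bounds on P
  have hPz : (P : ℝ) < z := by
    have : ((P : ℕ) : ℝ) ≤ ((N - 2 : ℕ) : ℝ) := by exact_mod_cast hPN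
    have hN2 : ((N - 2 : ℕ) : ℝ) = (N : ℝ) - 2 := by
      have : 2 ≤ N := by omega
      push_cast [Nat.cast_sub this]
      ring
    rw [hN2] at this
    linarith
  have hPz4 : z / 4 < (P : ℝ) := by
    have h1 : ((N - 1 : ℕ) : ℝ) ≤ 2 * (P : ℝ) := by exact_mod_cast h2P
    have hN1 : ((N - 1 : ℕ) : ℝ) = (N : ℝ) - 1 := by
      have : 1 ≤ N := by omega
      push_cast [Nat.cast_sub this]
      ring
    have hz20 : ((2 * q + 16 : ℕ) : ℝ) ≥ 20 := by
      have : (20 : ℕ) ≤ 2 * q + 16 := by have := hq.two_le; omega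
      exact_mod_cast this
    rw [hN1] at h1
    linarith
  refine ⟨n, P, hmn, hP, Nat.ne_of_gt hPq, ?_, ?_⟩
  · have : (P : ℝ) / (q : ℝ) ^ n < y := by
      rw [div_lt_iff₀ hw]
      calc (P : ℝ) < z := hPz
      _ = y * (q : ℝ) ^ n := hz
    linarith
  · have : y / 4 < (P : ℝ) / (q : ℝ) ^ n := by
      rw [lt_div_iff₀ hw]
      calc y / 4 * (q : ℝ) ^ n = z / 4 := by rw [hz]; ring
      _ < P := hPz4
    linarith

theorem stmt_4 (q : ℕ) (hq : q.Prime) (x : ℝ) (hx : 0 < x) :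
    ∃ (p : ℕ → ℕ) (n : ℕ → ℤ), (∀ i, (p i).Prime ∧ p i ≠ q) ∧ StrictMono n ∧
      HasSum (fun i => (p i : ℝ) / (q : ℝ) ^ (n i)) x := by
  have hQ0 : (0 : ℝ) < q := by exact_mod_cast hq.pos
  have hstep : ∀ (m : ℤ) (y : ℝ), ∃ np : ℤ × ℕ, 0 < y →
      m < np.1 ∧ np.2.Prime ∧ np.2 ≠ q ∧
      0 < y - (np.2 : ℝ) / (q : ℝ) ^ np.1 ∧
      y - (np.2 : ℝ) / (q : ℝ) ^ np.1 < 3 / 4 * y := by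
    intro m y
    by_cases hy : 0 < y
    · obtain ⟨n, P, h1, h2, h3, h4, h5⟩ := key_step q hq y hy m
      exact ⟨(n, P), fun _ => ⟨h1, h2, h3, h4, h5⟩⟩
    · exact ⟨(0, 0), fun h => absurd h hy⟩
  choose F hF using hstep
  -- state: T i = (last exponent used before step i, remainder before step i)
  set T : ℕ → ℤ × ℝ := fun i => Nat.rec ((0 : ℤ), x)
    (fun _ s => ((F s.1 s.2).1,
      s.2 - ((F s.1 s.2).2 : ℝ) / (q : ℝ) ^ (F s.1 s.2).1)) i with hT
  have hT0 : T 0 = (0, x) := rfl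
  have hTs : ∀ i, T (i + 1) = ((F (T i).1 (T i).2).1,
      (T i).2 - ((F (T i).1 (T i).2).2 : ℝ) / (q : ℝ) ^ (F (T i).1 (T i).2).1) :=
    fun i => rfl
  set n : ℕ → ℤ := fun i => (F (T i).1 (T i).2).1 with hn
  set p : ℕ → ℕ := fun i => (F (T i).1 (T i).2).2 with hp
  have hpos : ∀ i, 0 < (T i).2 ∧ (T i).2 ≤ (3 / 4 : ℝ) ^ i * x := by
    intro i
    induction i with
    | zero => refine ⟨?_, ?_⟩ <;> · rw [hT0]; simp [hx]
    | succ i ih =>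
      have h := hF (T i).1 (T i).2 ih.1
      rw [hTs i]
      refine ⟨h.2.2.2.1, ?_⟩
      have h5 := h.2.2.2.2
      have : (3 / 4 : ℝ) * (T i).2 ≤ (3 / 4 : ℝ) ^ (i + 1) * x := by
        rw [pow_succ]
        nlinarith [ih.2]
      simp only
      linarith
  have hnlt : ∀ i, (T i).1 < n i := fun i => (hF (T i).1 (T i).2 (hpos i).1).1
  have hmono : StrictMono n := by
    apply strictMono_nat_of_lt_succ
    intro i
    have := hnlt (i + 1)
    rwa [hTs i] at this
  have hterm : ∀ i, (0 : ℝ) ≤ (p i : ℝ) / (q : ℝ) ^ (n i) := by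
    intro i
    have := zpow_pos hQ0 (n i)
    positivity
  have hsum : ∀ i, ∑ j ∈ range i, (p j : ℝ) / (q : ℝ) ^ (n j) = x - (T i).2 := by
    intro i
    induction i with
    | zero => simp [hT0]
    | succ i ih =>
      rw [Finset.sum_range_succ, ih, hTs i]
      simp only
      ring
  have hle : ∀ i, ∑ j ∈ range i, (p j : ℝ) / (q : ℝ) ^ (n j) ≤ x := by
    intro i
    rw [hsum i]
    linarith [(hpos i).1]
  have hsummable : Summable (fun i => (p i : ℝ) / (q : ℝ) ^ (n i)) :=
    summable_of_sum_range_le hterm hle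
  refine ⟨p, n, fun i => ⟨(hF (T i).1 (T i).2 (hpos i).1).2.1,
    (hF (T i).1 (T i).2 (hpos i).1).2.2.1⟩, hmono, ?_⟩
  rw [hsummable.hasSum_iff_tendsto_nat]
  have hy0 : Tendsto (fun i => (T i).2) atTop (nhds 0) := by
    apply squeeze_zero (fun i => (hpos i).1.le) (fun i => (hpos i).2)
    have := tendsto_pow_atTop_nhds_zero_of_lt_one (by norm_num : (0:ℝ) ≤ 3/4) (by norm_num : (3/4:ℝ) < 1)
    simpa using this.mul_const x
  have : Tendsto (fun i => x - (T i).2) atTop (nhds (x - 0)) :=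
    tendsto_const_nhds.sub hy0
  simp only [sub_zero] at this
  exact this.congr (fun i => (hsum i).symm)
end

section
/- Let S be a non-trivial multiplicative subset of ℤ (0 ∉ S, S ≠ {±1}, and S does not contain all primes) and fix r ∈ ℕ, ε > 0. If every element w of S⁻¹ℤ whose image in ℝ lies in the interval (-ε, ε) can be written as a sum of r irreducible elements of S⁻¹ℤ, then every element of S⁻¹ℤ can be written as a sum of r irreducible elements of S⁻¹ℤ. -/
/-!
Some `s ∈ S` has `|s| > 1`, and `s` is a unit of `S⁻¹ℤ`. Multiplying by a unit preserves
irreducibility, so `w` is a sum of `r` irreducibles as soon as `w / sⁿ` is, and `w / sⁿ`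
lies in `(-ε, ε)` for `n` large.
-/

theorem Submonoid.exists_one_lt_abs_mem (S : Submonoid ℤ) (h0 : (0 : ℤ) ∉ S)
    (hne1 : (S : Set ℤ) ≠ {1}) (hne2 : (S : Set ℤ) ≠ {1, -1}) : ∃ s ∈ S, 1 < |s| := by
  by_contra! h
  have hunit : ∀ t ∈ S, t = 1 ∨ t = -1 := fun t ht ↦ by
    have := abs_le.mp (h t ht)
    have : t ≠ 0 := fun e ↦ h0 (e ▸ ht)
    omega
  by_cases hneg : (-1 : ℤ) ∈ S
  · refine hne2 (Set.ext fun t ↦ ⟨hunit t, ?_⟩)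
    rintro (rfl | rfl)
    exacts [S.one_mem, hneg]
  · refine hne1 (Set.ext fun t ↦ ⟨fun ht ↦ ?_, fun ht ↦ ht ▸ S.one_mem⟩)
    rcases hunit t ht with rfl | rfl
    exacts [rfl, absurd ht hneg]

theorem exists_abs_div_pow_lt {K : Type*} [Field K] [LinearOrder K] [IsStrictOrderedRing K]
    [Archimedean K] (x : K) {a ε : K} (ha : 1 < |a|) (hε : 0 < ε) :
    ∃ n : ℕ, |x / a ^ n| < ε := by
  obtain ⟨n, hn⟩ := pow_unbounded_of_one_lt (|x| / ε) ha
  refine ⟨n, ?_⟩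
  rw [abs_div, abs_pow, div_lt_iff₀ (by positivity)]
  rwa [div_lt_iff₀ hε, mul_comm] at hn

def IsSumOfIrreducibles {R : Type*} [Semiring R] (r : ℕ) (w : R) : Prop :=
  ∃ f : Fin r → R, (∀ i, Irreducible (f i)) ∧ w = ∑ i, f i

theorem IsSumOfIrreducibles.isUnit_mul {R : Type*} [Semiring R] {r : ℕ} {u w : R}
    (hu : IsUnit u) (hw : IsSumOfIrreducibles r w) : IsSumOfIrreducibles r (u * w) := by
  obtain ⟨f, hf, rfl⟩ := hw
  exact ⟨fun i ↦ u * f i, fun i ↦ (irreducible_isUnit_mul hu).mpr (hf i), Finset.mul_sum ..⟩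

theorem stmt_5_general (S : Submonoid ℤ) (h0 : (0 : ℤ) ∉ S)
    (hne1 : (S : Set ℤ) ≠ {1}) (hne2 : (S : Set ℤ) ≠ {1, -1})
    (r : ℕ) (ε : ℝ) (hε : 0 < ε)
    (φ : Localization S →+* ℚ)
    (hyp : ∀ w : Localization S, -ε < (φ w : ℝ) → (φ w : ℝ) < ε →
      ∃ f : Fin r → Localization S, (∀ i, Irreducible (f i)) ∧ w = ∑ i, f i) :
    ∀ w : Localization S,
      ∃ f : Fin r → Localization S, (∀ i, Irreducible (f i)) ∧ w = ∑ i, f i := by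
  intro w
  obtain ⟨s, hs, hs1⟩ := S.exists_one_lt_abs_mem h0 hne1 hne2
  obtain ⟨n, hn⟩ := exists_abs_div_pow_lt (φ w : ℝ) (a := s) (by exact_mod_cast hs1) hε
  let u := (IsLocalization.map_units (Localization S) ⟨s ^ n, pow_mem hs n⟩).unit
  have hφu : φ u = (s : ℚ) ^ n := by simp [u, map_intCast]
  have hφw' : (φ (↑u⁻¹ * w) : ℝ) = φ w / (s : ℝ) ^ n := by
    rw [map_mul, map_units_inv, hφu]
    push_cast
    ring
  have hw' : IsSumOfIrreducibles r (↑u⁻¹ * w) :=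
    hyp _ (by rw [hφw']; exact neg_lt_of_abs_lt hn) (by rw [hφw']; exact lt_of_abs_lt hn)
  exact u.mul_inv_cancel_left w ▸ hw'.isUnit_mul u.isUnit

theorem stmt_5 (S : Submonoid ℤ) (h0 : (0 : ℤ) ∉ S)
    (hne1 : (S : Set ℤ) ≠ {1}) (hne2 : (S : Set ℤ) ≠ {1, -1})
    (hp : ∃ p : ℤ, Prime p ∧ 0 < p ∧ p ∉ S)
    (r : ℕ) (ε : ℝ) (hε : 0 < ε)
    (φ : Localization S →+* ℚ)
    (hyp : ∀ w : Localization S, -ε < (φ w : ℝ) → (φ w : ℝ) < ε →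
      ∃ f : Fin r → Localization S, (∀ i, Irreducible (f i)) ∧ w = ∑ i, f i) :
    ∀ w : Localization S,
      ∃ f : Fin r → Localization S, (∀ i, Irreducible (f i)) ∧ w = ∑ i, f i :=
  stmt_5_general S h0 hne1 hne2 r ε hε φ hyp
end

section
/- Let S be a non-trivial multiplicative subset of ℤ, fix r ∈ ℕ and n ∈ ℕ with n > 0. If every element w of S⁻¹ℤ with w > n (as a rational number) is a sum of r irreducible elements of S⁻¹ℤ, then every element of S⁻¹ℤ is a sum of r irreducible elements of S⁻¹ℤ. -/
set_option linter.unnecessarySimpa false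
set_option linter.unusedTactic false
set_option linter.unreachableTactic false
set_option linter.unusedVariables false
variable {S : Submonoid ℤ}

/-- `x` is a sum of `m` irreducible elements of `Localization S`. -/
def RepN (S : Submonoid ℤ) (m : ℕ) (x : Localization S) : Prop :=
  ∃ f : Fin m → Localization S, (∀ i, Irreducible (f i)) ∧ x = ∑ i, f i

namespace RepN


theorem zero : RepN S 0 0 := ⟨fun i => 0, fun i => i.elim0, by simp⟩

theorem single {x : Localization S} (hx : Irreducible x) : RepN S 1 x :=
  ⟨fun _ => x, fun _ => hx, by simp⟩

theorem add {a b : ℕ} {x y : Localization S} (hx : RepN S a x) (hy : RepN S b y) :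
    RepN S (a + b) (x + y) := by
  obtain ⟨f, hf, rfl⟩ := hx
  obtain ⟨g, hg, rfl⟩ := hy
  refine ⟨Fin.addCases f g, ?_, ?_⟩
  · intro i
    refine Fin.addCases (fun j => ?_) (fun j => ?_) i
    · simpa using hf j
    · simpa using hg j
  · rw [Fin.sum_univ_add]
    simp

theorem congr_val {m : ℕ} {x y : Localization S} (hx : RepN S m x) (h : x = y) :
    RepN S m y := h ▸ hx

theorem congr_card {m m' : ℕ} {x : Localization S} (hx : RepN S m x) (h : m = m') :
    RepN S m' x := h ▸ hx

theorem unit_mul {m : ℕ} {v x : Localization S} (hv : IsUnit v) (hx : RepN S m x) :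
    RepN S m (v * x) := by
  obtain ⟨f, hf, rfl⟩ := hx
  exact ⟨fun i => v * f i, fun i => (irreducible_isUnit_mul hv).2 (hf i),
    by rw [Finset.mul_sum]⟩

theorem pairs {π : Localization S} (hπ : Irreducible π) (j : ℕ) : RepN S (2 * j) 0 := by
  induction j with
  | zero => exact RepN.zero
  | succ k ih =>
      have h2 : RepN S 2 0 := by
        have := (single hπ).add (single ((irreducible_isUnit_mul isUnit_one.neg).2 hπ))
        exact this.congr_val (by simp)
      have := ih.add h2
      exact (this.congr_val (by ring)).congr_card (by ring)

theorem nsmul {π : Localization S} (hπ : Irreducible π) (c : ℕ) :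
    RepN S c ((c : Localization S) * π) := by
  induction c with
  | zero => exact RepN.zero.congr_val (by simp)
  | succ k ih =>
      have := ih.add (single hπ)
      exact this.congr_val (by push_cast; ring)

end RepN



theorem iota_inj (h0 : (0:ℤ) ∉ S) : Function.Injective (algebraMap ℤ (Localization S)) := by
  apply IsLocalization.injective (M := S)
  intro s hs
  exact mem_nonZeroDivisors_of_ne_zero (by rintro rfl; exact h0 hs)

theorem loc_domain (h0 : (0:ℤ) ∉ S) : IsDomain (Localization S) :=
  IsLocalization.isDomain_localization
    (fun s hs => mem_nonZeroDivisors_of_ne_zero (by rintro rfl; exact h0 hs))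

theorem phi_iota (φ : Localization S →+* ℚ) (z : ℤ) :
    φ (algebraMap ℤ (Localization S) z) = (z : ℚ) := by
  have h : φ.comp (algebraMap ℤ (Localization S)) = Int.castRingHom ℚ := Subsingleton.elim _ _
  have := RingHom.congr_fun h z
  simpa using this

theorem phi_ne_zero (φ : Localization S →+* ℚ) {x : Localization S} (hx : x ≠ 0) :
    φ x ≠ 0 := by
  intro h
  apply hx
  obtain ⟨⟨a, t⟩, ht⟩ := IsLocalization.surj S x
  dsimp only at ht
  have h1 : φ (x * algebraMap ℤ (Localization S) t) = (a : ℚ) := by rw [ht, phi_iota]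
  rw [map_mul, h, zero_mul] at h1
  have ha : (a : ℤ) = 0 := by exact_mod_cast h1.symm
  have hu : IsUnit (algebraMap ℤ (Localization S) (t : ℤ)) := IsLocalization.map_units _ t
  have : x * algebraMap ℤ (Localization S) (t:ℤ) = 0 := by
    rw [ht, ha, map_zero]
  obtain ⟨u, hu⟩ := hu
  calc x = x * (u * ↑u⁻¹) := by simp
    _ = (x * ↑u) * ↑u⁻¹ := by ring
    _ = 0 := by rw [hu, this, zero_mul]

/-- if all prime divisors of `b ≠ 0` become units, then `b` becomes a unit. -/
theorem isUnit_of_prime_divisors :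
    ∀ (m : ℕ) (b : ℤ), b.natAbs = m → b ≠ 0 →
      (∀ p : ℕ, p.Prime → (p:ℤ) ∣ b → IsUnit (algebraMap ℤ (Localization S) (p:ℤ))) →
      IsUnit (algebraMap ℤ (Localization S) b) := by
  intro m
  induction m using Nat.strong_induction_on with
  | _ m IH =>
    intro b hm hb hdvd
    rcases eq_or_ne b.natAbs 1 with h1 | h1
    · rcases Int.natAbs_eq_iff.1 h1 with rfl | rfl
      · simp
      · simpa using (IsUnit.neg (by simp : IsUnit (algebraMap ℤ (Localization S) 1)))
    · obtain ⟨p, pp, pdvd⟩ := Nat.exists_prime_and_dvd h1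
      have hpz : (p:ℤ) ∣ b := Int.dvd_natAbs.1 (Int.natCast_dvd_natCast.2 pdvd)
      obtain ⟨c, rfl⟩ := hpz
      have hc : c ≠ 0 := by rintro rfl; simp at hb
      have hclt : c.natAbs < m := by
        subst hm
        have : (p:ℤ).natAbs * c.natAbs = ((p:ℤ) * c).natAbs := (Int.natAbs_mul _ _).symm
        have hple : 2 ≤ p := pp.two_le
        calc c.natAbs < p * c.natAbs := by
              have : 0 < c.natAbs := Int.natAbs_pos.2 hc
              nlinarith
          _ = ((p:ℤ)*c).natAbs := by rw [Int.natAbs_mul]; simp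
      have hcu : IsUnit (algebraMap ℤ (Localization S) c) := by
        refine IH c.natAbs hclt c rfl hc ?_
        intro p' pp' hd
        exact hdvd p' pp' (hd.mul_left _)
      have hpu : IsUnit (algebraMap ℤ (Localization S) (p:ℤ)) :=
        hdvd p pp ⟨c, rfl⟩
      rw [map_mul]
      exact hpu.mul hcu

theorem prime_iota (h0 : (0:ℤ) ∉ S) {p : ℕ} (pp : p.Prime)
    (hnu : ¬ IsUnit (algebraMap ℤ (Localization S) (p:ℤ))) :
    Prime (algebraMap ℤ (Localization S) (p:ℤ)) := by
  set f := algebraMap ℤ (Localization S) with hf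
  have finj : Function.Injective f := iota_inj h0
  refine ⟨?_, hnu, ?_⟩
  · intro h
    have : (p:ℤ) = 0 := finj (by simpa using h)
    exact_mod_cast pp.ne_zero (by exact_mod_cast this)
  · intro x y ⟨c, hc⟩
    obtain ⟨⟨a, t₁⟩, h₁⟩ := IsLocalization.surj S x
    obtain ⟨⟨b, t₂⟩, h₂⟩ := IsLocalization.surj S y
    obtain ⟨⟨d, t₃⟩, h₃⟩ := IsLocalization.surj S c
    have key : a * b * (t₃:ℤ) = (p:ℤ) * d * (t₁:ℤ) * (t₂:ℤ) := by
      apply finj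
      have : f (a * b * (t₃:ℤ)) = (x * f t₁) * (y * f t₂) * f (t₃:ℤ) := by
        rw [h₁, h₂]; push_cast [map_mul]; ring
      rw [this]
      have : (x * f t₁) * (y * f t₂) * f (t₃:ℤ) = (x*y) * f (t₃:ℤ) * f t₁ * f t₂ := by ring
      rw [this, hc]
      have : f p * c * f (t₃:ℤ) * f t₁ * f t₂ = f p * (c * f (t₃:ℤ)) * f t₁ * f t₂ := by ring
      rw [this, h₃]
      push_cast [map_mul]
      ring
    have hdvd : (p:ℤ) ∣ a * b * t₃ := ⟨d * t₁ * t₂, by linarith [key]⟩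
    have hnt : ¬ ((p:ℤ) ∣ (t₃:ℤ)) := by
      intro ⟨e, he⟩
      apply hnu
      have : f (t₃:ℤ) = f p * f e := by rw [← map_mul]; exact congrArg f he
      have hu : IsUnit (f (t₃:ℤ)) := IsLocalization.map_units _ t₃
      rw [this] at hu
      exact isUnit_of_mul_isUnit_left hu
    have hab : (p:ℤ) ∣ a * b := by
      rcases (Int.Prime.dvd_mul' (by exact_mod_cast pp) hdvd) with h | h
      · exact h
      · exact absurd h hnt
    rcases (Int.Prime.dvd_mul' (by exact_mod_cast pp) hab) with h | h
    · left
      obtain ⟨e, he⟩ := h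
      obtain ⟨u, hu⟩ := IsLocalization.map_units (Localization S) t₁
      refine ⟨f e * ↑u⁻¹, ?_⟩
      have : x * f t₁ = f p * f e := by rw [h₁, ← map_mul]; exact congrArg f he
      rw [hf] at this ⊢
      calc x = x * (↑u * ↑u⁻¹) := by simp
        _ = (x * f t₁) * ↑u⁻¹ := by rw [hu]; ring
        _ = f p * (f e * ↑u⁻¹) := by rw [this]; ring
    · right
      obtain ⟨e, he⟩ := h
      obtain ⟨u, hu⟩ := IsLocalization.map_units (Localization S) t₂
      refine ⟨f e * ↑u⁻¹, ?_⟩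
      have : y * f t₂ = f p * f e := by rw [h₂, ← map_mul]; exact congrArg f he
      rw [hf] at this ⊢
      calc y = y * (↑u * ↑u⁻¹) := by simp
        _ = (y * f t₂) * ↑u⁻¹ := by rw [hu]; ring
        _ = f p * (f e * ↑u⁻¹) := by rw [this]; ring


theorem zmod8_oddform : ∀ x y : ZMod 8, x * y = 1 → ∃ c, x = 2*c+1 := by decide

theorem zmod8_unit_odd : ∀ c : ZMod 8, IsUnit (2*c+1) := by decide

theorem zmod2_oddform : ∀ x y : ZMod 2, x * y = 1 → x = 1 := by decide

theorem zmod8_contra : ∀ e c j : ZMod 8, 4*(2*e+1) ≠ 2*(2*c + (2*j+3)) := by decide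

theorem zmod8_contra3 : ∀ E a b c : ZMod 8, 4*(2*E+1) ≠ 2*(2*a+1)+2*(2*b+1)+2*(2*c+1) := by decide

theorem sum_odd (m : ℕ) (g : Fin m → ZMod 8) (h : ∀ i, ∃ c, g i = 2*c+1) :
    ∃ c, ∑ i, g i = 2*c + (m : ZMod 8) := by
  induction m with
  | zero => exact ⟨0, by simp⟩
  | succ k ih =>
      obtain ⟨c, hc⟩ := ih (fun i => g i.succ) (fun i => h i.succ)
      obtain ⟨c0, hc0⟩ := h 0
      refine ⟨c0 + c, ?_⟩
      rw [Fin.sum_univ_succ, hc0, hc]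
      push_cast
      ring
theorem atom_classify (h0 : (0:ℤ) ∉ S) {g : Localization S} (hg : Irreducible g) :
    ∃ (p : ℕ) (u : Localization S), p.Prime ∧ ¬IsUnit (algebraMap ℤ (Localization S) (p:ℤ)) ∧
      IsUnit u ∧ g = algebraMap ℤ (Localization S) (p:ℤ) * u := by
  set f := algebraMap ℤ (Localization S) with hf
  obtain ⟨⟨a, t⟩, ht⟩ := IsLocalization.surj S g
  dsimp only at ht
  obtain ⟨u₀, hu₀⟩ := IsLocalization.map_units (Localization S) t
  have hgu : g = f a * ↑u₀⁻¹ := by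
    calc g = g * (↑u₀ * ↑u₀⁻¹) := by simp
      _ = (g * f (t:ℤ)) * ↑u₀⁻¹ := by rw [hu₀]; ring
      _ = f a * ↑u₀⁻¹ := by rw [ht]
  have ha : a ≠ 0 := by
    rintro rfl
    apply hg.ne_zero
    rw [hgu, map_zero, zero_mul]
  have hex : ∃ p : ℕ, p.Prime ∧ (p:ℤ) ∣ a ∧ ¬IsUnit (f (p:ℤ)) := by
    by_contra hcon
    push_neg at hcon
    have : IsUnit (f a) := by
      refine isUnit_of_prime_divisors a.natAbs a rfl ha ?_
      intro p pp hdvd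
      exact hcon p pp hdvd
    apply hg.not_isUnit
    rw [hgu]
    exact this.mul u₀⁻¹.isUnit
  obtain ⟨p, pp, ⟨c, rfl⟩, hnu⟩ := hex
  have : g = f p * (f c * ↑u₀⁻¹) := by rw [hgu, map_mul]; ring
  rcases hg.isUnit_or_isUnit this with h | h
  · exact absurd h hnu
  · exact ⟨p, f c * ↑u₀⁻¹, pp, hnu, h, this⟩

theorem s_not_dvd (h0 : (0:ℤ) ∉ S) {k : ℕ}
    (hk : ¬IsUnit (algebraMap ℤ (Localization S) (k:ℤ))) :
    ∀ y : S, ¬ ((k:ℤ) ∣ (y:ℤ)) := by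
  intro y ⟨e, he⟩
  apply hk
  have : algebraMap ℤ (Localization S) (y:ℤ)
      = algebraMap ℤ (Localization S) (k:ℤ) * algebraMap ℤ (Localization S) e := by
    rw [← map_mul]; exact congrArg _ he
  have hu : IsUnit (algebraMap ℤ (Localization S) (y:ℤ)) := IsLocalization.map_units _ y
  rw [this] at hu
  exact isUnit_of_mul_isUnit_left hu

/-- The mod-8 character of the localization, when 2 is not invertible. -/
noncomputable def psi8 (h0 : (0:ℤ) ∉ S)
    (h2 : ¬IsUnit (algebraMap ℤ (Localization S) ((2:ℕ):ℤ))) : Localization S →+* ZMod 8 :=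
  IsLocalization.lift (M := S) (g := Int.castRingHom (ZMod 8)) (by
    intro y
    have hodd : ¬ ((2:ℤ) ∣ (y:ℤ)) := by exact_mod_cast s_not_dvd h0 h2 y
    have : ∃ m : ℤ, (y:ℤ) = 2*m+1 := by
      have : Odd (y:ℤ) := Int.not_even_iff_odd.1 (fun he => hodd he.two_dvd)
      obtain ⟨m, hm⟩ := this
      exact ⟨m, hm⟩
    obtain ⟨m, hm⟩ := this
    simp only [Int.castRingHom]
    show IsUnit ((y : ℤ) : ZMod 8)
    rw [hm]
    push_cast
    exact zmod8_unit_odd (m : ZMod 8))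

theorem psi8_iota (h0 : (0:ℤ) ∉ S) (h2 : ¬IsUnit (algebraMap ℤ (Localization S) ((2:ℕ):ℤ)))
    (z : ℤ) : psi8 h0 h2 (algebraMap ℤ (Localization S) z) = (z : ZMod 8) :=
  IsLocalization.lift_eq _ z
/-- The mod-2 character. -/
noncomputable def psi2 (h0 : (0:ℤ) ∉ S)
    (h2 : ¬IsUnit (algebraMap ℤ (Localization S) ((2:ℕ):ℤ))) : Localization S →+* ZMod 2 :=
  IsLocalization.lift (M := S) (g := Int.castRingHom (ZMod 2)) (by
    intro y
    have hodd : ¬ ((2:ℤ) ∣ (y:ℤ)) := by exact_mod_cast s_not_dvd h0 h2 y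
    show IsUnit ((y : ℤ) : ZMod 2)
    have : ((y:ℤ) : ZMod 2) ≠ 0 := by
      intro hz
      rw [ZMod.intCast_zmod_eq_zero_iff_dvd] at hz
      exact hodd (by exact_mod_cast hz)
    rcases (by decide : ∀ x : ZMod 2, x = 0 ∨ x = 1) ((y:ℤ) : ZMod 2) with h | h
    · exact absurd h this
    · rw [h]; exact isUnit_one)

theorem psi2_iota (h0 : (0:ℤ) ∉ S) (h2 : ¬IsUnit (algebraMap ℤ (Localization S) ((2:ℕ):ℤ)))
    (z : ℤ) : psi2 h0 h2 (algebraMap ℤ (Localization S) z) = (z : ZMod 2) :=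
  IsLocalization.lift_eq _ z

/-- The mod-q character, for a noninvertible prime q. -/
noncomputable def psiq (h0 : (0:ℤ) ∉ S) {q : ℕ} (hq : q.Prime)
    (hqn : ¬IsUnit (algebraMap ℤ (Localization S) ((q:ℕ):ℤ))) : Localization S →+* ZMod q :=
  IsLocalization.lift (M := S) (g := Int.castRingHom (ZMod q)) (by
    intro y
    have hd : ¬ ((q:ℤ) ∣ (y:ℤ)) := by exact_mod_cast s_not_dvd h0 hqn y
    show IsUnit ((y : ℤ) : ZMod q)
    haveI : Fact q.Prime := ⟨hq⟩
    have : ((y:ℤ) : ZMod q) ≠ 0 := by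
      intro hz
      rw [ZMod.intCast_zmod_eq_zero_iff_dvd] at hz
      exact hd (by exact_mod_cast hz)
    exact this.isUnit)

theorem psiq_iota (h0 : (0:ℤ) ∉ S) {q : ℕ} (hq : q.Prime)
    (hqn : ¬IsUnit (algebraMap ℤ (Localization S) ((q:ℕ):ℤ)))
    (z : ℤ) : psiq h0 hq hqn (algebraMap ℤ (Localization S) z) = (z : ZMod q) :=
  IsLocalization.lift_eq _ z

/-- images of units of the localization are "odd" in ZMod 8. -/
theorem psi8_unit_odd (h0 : (0:ℤ) ∉ S) (h2 : ¬IsUnit (algebraMap ℤ (Localization S) ((2:ℕ):ℤ)))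
    {u : Localization S} (hu : IsUnit u) : ∃ c : ZMod 8, psi8 h0 h2 u = 2*c+1 := by
  obtain ⟨v, hv⟩ := hu.exists_right_inv
  have : psi8 h0 h2 u * psi8 h0 h2 v = 1 := by rw [← map_mul, hv, map_one]
  exact zmod8_oddform _ _ this

theorem psi2_unit_one (h0 : (0:ℤ) ∉ S) (h2 : ¬IsUnit (algebraMap ℤ (Localization S) ((2:ℕ):ℤ)))
    {u : Localization S} (hu : IsUnit u) : psi2 h0 h2 u = 1 := by
  obtain ⟨v, hv⟩ := hu.exists_right_inv
  have : psi2 h0 h2 u * psi2 h0 h2 v = 1 := by rw [← map_mul, hv, map_one]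
  exact zmod2_oddform _ _ this

theorem psiq_unit_ne (h0 : (0:ℤ) ∉ S) {q : ℕ} (hq : q.Prime)
    (hqn : ¬IsUnit (algebraMap ℤ (Localization S) ((q:ℕ):ℤ)))
    {u : Localization S} (hu : IsUnit u) : psiq h0 hq hqn u ≠ 0 := by
  haveI : Fact q.Prime := ⟨hq⟩
  obtain ⟨v, hv⟩ := hu.exists_right_inv
  have h1 : psiq h0 hq hqn u * psiq h0 hq hqn v = 1 := by rw [← map_mul, hv, map_one]
  intro h
  rw [h, zero_mul] at h1
  exact zero_ne_one h1
theorem rep_of_ne_zero (φ : Localization S →+* ℚ) {s : ℤ} (hsS : s ∈ S) (hs1 : 1 < s)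
    {r n : ℕ}
    (hyp' : ∀ x : Localization S, (n:ℚ) < φ x → RepN S r x)
    {w : Localization S} (hw : w ≠ 0) : RepN S r w := by
  set ι := algebraMap ℤ (Localization S) with hι
  have hσu : IsUnit (ι s) := IsLocalization.map_units _ (⟨s, hsS⟩ : S)
  have hφσ : φ (ι s) = (s:ℚ) := phi_iota φ s
  have hs1' : (1:ℚ) < (s:ℚ) := by exact_mod_cast hs1
  have hφw : φ w ≠ 0 := phi_ne_zero φ hw
  rcases hφw.lt_or_gt with hneg | hpos
  · -- φ w < 0 : use -(ι s)^k
    obtain ⟨k, hk⟩ := pow_unbounded_of_one_lt ((n:ℚ)/(-φ w)) hs1'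
    have hmul : (n:ℚ) < φ ((-(ι s)^k) * w) := by
      rw [map_mul, map_neg, map_pow, hφσ]
      have hpos' : (0:ℚ) < -φ w := by linarith
      rw [div_lt_iff₀ hpos'] at hk
      calc (n:ℚ) < (s:ℚ)^k * (-φ w) := hk
        _ = -(s:ℚ)^k * φ w := by ring
    have hrep := hyp' _ hmul
    have hun : IsUnit (-(ι s)^k) := (hσu.pow k).neg
    obtain ⟨u, hu⟩ := hun
    have := hrep.unit_mul u⁻¹.isUnit
    refine this.congr_val ?_
    calc (↑u⁻¹ : Localization S) * ((-(ι s)^k) * w) = ↑u⁻¹ * (↑u * w) := by rw [hu]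
      _ = w := by rw [← mul_assoc]; simp
  · obtain ⟨k, hk⟩ := pow_unbounded_of_one_lt ((n:ℚ)/(φ w)) hs1'
    have hmul : (n:ℚ) < φ ((ι s)^k * w) := by
      rw [map_mul, map_pow, hφσ]
      rw [div_lt_iff₀ hpos] at hk
      exact hk
    have hrep := hyp' _ hmul
    obtain ⟨u, hu⟩ := hσu.pow k
    have := hrep.unit_mul u⁻¹.isUnit
    refine this.congr_val ?_
    calc (↑u⁻¹ : Localization S) * ((ι s)^k * w) = ↑u⁻¹ * (↑u * w) := by rw [hu]
      _ = w := by rw [← mul_assoc]; simp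

theorem exists_atom (φ : Localization S →+* ℚ) {r n : ℕ} (hr : 0 < r)
    (hyp' : ∀ x : Localization S, (n:ℚ) < φ x → RepN S r x) :
    ∃ π : Localization S, Irreducible π := by
  have h1 : (n:ℚ) < φ (algebraMap ℤ (Localization S) ((n:ℤ)+1)) := by
    rw [phi_iota]; push_cast; linarith
  obtain ⟨f, hf, _⟩ := hyp' _ h1
  exact ⟨f ⟨0, hr⟩, hf _⟩

theorem r_zero_contra (φ : Localization S →+* ℚ) {n : ℕ}
    (hyp' : ∀ x : Localization S, (n:ℚ) < φ x → RepN S 0 x) : False := by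
  have h1 : (n:ℚ) < φ (algebraMap ℤ (Localization S) ((n:ℤ)+1)) := by
    rw [phi_iota]; push_cast; linarith
  obtain ⟨f, hf, hsum⟩ := hyp' _ h1
  have : φ (algebraMap ℤ (Localization S) ((n:ℤ)+1)) = 0 := by
    rw [hsum]; simp
  rw [phi_iota] at this
  have : ((n:ℤ):ℚ) + 1 = 0 := by push_cast at this ⊢; linarith
  have hn0 : (0:ℚ) ≤ ((n:ℤ):ℚ) := by positivity
  linarith

theorem r_one_contra (φ : Localization S →+* ℚ) {n : ℕ}
    (hyp' : ∀ x : Localization S, (n:ℚ) < φ x → RepN S 1 x) : False := by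
  set ι := algebraMap ℤ (Localization S) with hι
  have hn0 : (0:ℚ) ≤ (n:ℚ) := by positivity
  have h1 : (n:ℚ) < φ (ι (((n:ℤ)+1) * ((n:ℤ)+1))) := by
    rw [phi_iota]; push_cast; nlinarith
  obtain ⟨f, hf, hsum⟩ := hyp' _ h1
  have hsum' : ι (((n:ℤ)+1) * ((n:ℤ)+1)) = f 0 := by
    rw [hsum, Fin.sum_univ_one]
  have hirr : Irreducible (ι (((n:ℤ)+1) * ((n:ℤ)+1))) := hsum' ▸ hf 0
  have hfac : ι (((n:ℤ)+1) * ((n:ℤ)+1)) = ι ((n:ℤ)+1) * ι ((n:ℤ)+1) := map_mul _ _ _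
  have hu : IsUnit (ι ((n:ℤ)+1)) := by
    rcases hirr.isUnit_or_isUnit hfac with h | h <;> exact h
  exact hirr.not_isUnit (hfac ▸ hu.mul hu)
/-- case where 2 is a unit, r = 2j+3 -/
theorem rep_zero_two_unit (h2 : IsUnit (algebraMap ℤ (Localization S) (2:ℤ)))
    {π : Localization S} (hπ : Irreducible π) (j : ℕ) :
    RepN S (2*j+3) 0 := by
  set ι := algebraMap ℤ (Localization S) with hι
  have hm2 : IsUnit (ι (-2:ℤ)) := by
    have : ι (-2:ℤ) = - ι (2:ℤ) := by rw [map_neg]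
    rw [this]; exact h2.neg
  have hA3 : Irreducible (ι (-2:ℤ) * π) := (irreducible_isUnit_mul hm2).2 hπ
  have h1 := ((RepN.single hπ).add (RepN.single hπ)).add (RepN.single hA3)
  have h2' := h1.add (RepN.pairs hπ j)
  refine (h2'.congr_val ?_).congr_card (by ring)
  have hv : ι (-2:ℤ) = -2 := by rw [map_neg]; norm_num
  rw [hv]; ring

/-- two distinct noninvertible odd primes give a sum of 2j+3 irreducibles equal to zero -/
theorem rep_zero_two_odd (h0 : (0:ℤ) ∉ S)
    (h2 : ¬IsUnit (algebraMap ℤ (Localization S) (2:ℤ)))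
    {q₁ q₂ : ℕ} (hq₁ : q₁.Prime) (hq₂ : q₂.Prime) (hq₁2 : q₁ ≠ 2) (hq₂2 : q₂ ≠ 2)
    (hn₁ : ¬IsUnit (algebraMap ℤ (Localization S) ((q₁:ℕ):ℤ)))
    (hn₂ : ¬IsUnit (algebraMap ℤ (Localization S) ((q₂:ℕ):ℤ)))
    (hlt : q₁ < q₂)
    (hmin : ∀ p : ℕ, p.Prime → p ≠ 2 → ¬IsUnit (algebraMap ℤ (Localization S) ((p:ℕ):ℤ)) →
      (p = q₁ ∨ q₂ ≤ p))
    (j : ℕ) : RepN S (2*j+3) 0 := by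
  haveI : IsDomain (Localization S) := loc_domain h0
  set ι := algebraMap ℤ (Localization S) with hι
  have h2n : ¬IsUnit (ι ((2:ℕ):ℤ)) := by simpa using h2
  have hirr2 : Irreducible (ι (2:ℤ)) := by
    have h := (prime_iota (S := S) h0 Nat.prime_two h2n).irreducible
    simpa using h
  have hirrq₁ : Irreducible (ι ((q₁:ℕ):ℤ)) := (prime_iota (S := S) h0 hq₁ hn₁).irreducible
  have hirrq₂ : Irreducible (ι ((q₂:ℕ):ℤ)) := (prime_iota (S := S) h0 hq₂ hn₂).irreducible
  have hodd₁ : (q₁ : ℤ) % 2 = 1 := by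
    obtain ⟨k, hk⟩ := hq₁.odd_of_ne_two hq₁2; omega
  have hodd₂ : (q₂ : ℤ) % 2 = 1 := by
    obtain ⟨k, hk⟩ := hq₂.odd_of_ne_two hq₂2; omega
  have hq₁q₂ : ¬ ((q₁:ℤ) ∣ (q₂:ℤ)) := by
    intro hd
    have : q₁ ∣ q₂ := by exact_mod_cast hd
    exact (by omega : q₁ ≠ q₂) ((Nat.prime_dvd_prime_iff_eq hq₁ hq₂).1 this)
  have hltz : (q₁:ℤ) < (q₂:ℤ) := by exact_mod_cast hlt
  have hunit : ∀ e : ℤ, e % 2 = 1 → 0 < e → e < q₂ → ¬((q₁:ℤ) ∣ e) → IsUnit (ι e) := by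
    intro e he h1 h2' hnd
    refine isUnit_of_prime_divisors e.natAbs e rfl (by omega) ?_
    intro p pp hdvd
    by_contra hnu
    have hp2 : p ≠ 2 := by
      rintro rfl
      obtain ⟨c, hc⟩ := hdvd
      omega
    rcases hmin p pp hp2 hnu with rfl | hge
    · exact hnd hdvd
    · have h1' : (p:ℤ) ≤ e := Int.le_of_dvd h1 hdvd
      have h2'' : (q₂:ℤ) ≤ (p:ℤ) := by exact_mod_cast hge
      omega
  set d : ℤ := ((q₂:ℤ) - q₁)/2 with hd
  set σ : ℤ := ((q₂:ℤ) + q₁)/2 with hσ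
  rcases Int.even_or_odd d with hde | hdo
  · -- σ is odd; relation 2σ - q₁ - q₂ = 0
    have hσo : σ % 2 = 1 := by obtain ⟨c, hc⟩ := hde; omega
    have hσu : IsUnit (ι (-σ)) := by
      have : IsUnit (ι σ) := by
        refine hunit σ hσo (by omega) (by omega) ?_
        intro hdv
        have h' : (q₁:ℤ) ∣ 2*σ := hdv.mul_left 2
        have he : 2*σ = (q₁:ℤ) + (q₂:ℤ) := by omega
        rw [he] at h'
        exact hq₁q₂ ((dvd_add_right dvd_rfl).1 h')
      have hneg : ι (-σ) = - ι σ := by rw [map_neg]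
      rw [hneg]; exact this.neg
    have hA1 : Irreducible (ι (2:ℤ) * ι (-σ)) := (irreducible_mul_isUnit hσu).2 hirr2
    have hrep := (((RepN.single hA1).add (RepN.single hirrq₁)).add (RepN.single hirrq₂)).add
      (RepN.pairs hirr2 j)
    refine (hrep.congr_val ?_).congr_card (by ring)
    rw [← map_mul, ← map_add, ← map_add, add_zero]
    have hz : (2:ℤ) * (-σ) + (q₁:ℤ) + (q₂:ℤ) = 0 := by omega
    rw [hz, map_zero]
  · -- d is odd; relation 2d + q₁ - q₂ = 0
    have hdo' : d % 2 = 1 := by obtain ⟨c, hc⟩ := hdo; omega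
    have hdu : IsUnit (ι d) := by
      refine hunit d hdo' (by omega) (by omega) ?_
      intro hdv
      have h' : (q₁:ℤ) ∣ 2*d := hdv.mul_left 2
      have h'' : (q₁:ℤ) ∣ 2*d + q₁ := h'.add dvd_rfl
      have he : 2*d + (q₁:ℤ) = (q₂:ℤ) := by omega
      rw [he] at h''
      exact hq₁q₂ h''
    have hA1 : Irreducible (ι (2:ℤ) * ι d) := (irreducible_mul_isUnit hdu).2 hirr2
    have hA3 : Irreducible ((-1 : Localization S) * ι ((q₂:ℕ):ℤ)) :=
      (irreducible_isUnit_mul isUnit_one.neg).2 hirrq₂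
    have hrep := (((RepN.single hA1).add (RepN.single hirrq₁)).add (RepN.single hA3)).add
      (RepN.pairs hirr2 j)
    refine (hrep.congr_val ?_).congr_card (by ring)
    have hv : ι (2:ℤ) * ι d + ι ((q₁:ℕ):ℤ) + (-1) * ι ((q₂:ℕ):ℤ) + 0
        = ι (2*d + (q₁:ℤ) - (q₂:ℤ)) := by
      rw [← map_mul, map_sub, map_add]
      ring
    rw [hv]
    have hz : (2:ℤ)*d + (q₁:ℤ) - (q₂:ℤ) = 0 := by omega
    rw [hz, map_zero]

theorem rep_zero_single_small (h0 : (0:ℤ) ∉ S)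
    (h2 : ¬IsUnit (algebraMap ℤ (Localization S) (2:ℤ)))
    {q : ℕ} (hq : q.Prime) (hq2 : q ≠ 2)
    (hqn : ¬IsUnit (algebraMap ℤ (Localization S) ((q:ℕ):ℤ)))
    {r : ℕ} (hrq : q + 2 ≤ r) (hrodd : r % 2 = 1) : RepN S r 0 := by
  haveI : IsDomain (Localization S) := loc_domain h0
  set ι := algebraMap ℤ (Localization S) with hι
  have h2n : ¬IsUnit (ι ((2:ℕ):ℤ)) := by simpa using h2
  have hirr2 : Irreducible (ι (2:ℤ)) := by
    have h := (prime_iota (S := S) h0 Nat.prime_two h2n).irreducible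
    simpa using h
  have hirrq : Irreducible (ι ((q:ℕ):ℤ)) := (prime_iota (S := S) h0 hq hqn).irreducible
  have hirrm2 : Irreducible (-ι (2:ℤ)) := by
    have := (irreducible_isUnit_mul isUnit_one.neg).2 hirr2
    simpa using this
  have hqodd : q % 2 = 1 := by
    obtain ⟨k, hk⟩ := hq.odd_of_ne_two hq2; omega
  have hrep := (((RepN.single hirrq).add (RepN.single hirrq)).add (RepN.nsmul hirrm2 q)).add
    (RepN.pairs hirr2 ((r - q - 2)/2))
  refine (hrep.congr_val ?_).congr_card (by omega)
  rw [add_zero]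
  have hcast : ((q:ℕ) : Localization S) = ι ((q:ℕ):ℤ) := (map_natCast ι q).symm
  rw [hcast, ← map_neg, ← map_mul, ← map_add, ← map_add]
  have : ((q:ℕ):ℤ) + ((q:ℕ):ℤ) + ((q:ℕ):ℤ) * (-2) = 0 := by ring
  rw [this, map_zero]

theorem rep_zero_single_large (h0 : (0:ℤ) ∉ S)
    (h2 : ¬IsUnit (algebraMap ℤ (Localization S) (2:ℤ)))
    {q : ℕ} (hq : q.Prime) (hq2 : q ≠ 2)
    (hqn : ¬IsUnit (algebraMap ℤ (Localization S) ((q:ℕ):ℤ)))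
    (hall : ∀ p : ℕ, p.Prime → ¬IsUnit (algebraMap ℤ (Localization S) ((p:ℕ):ℤ)) →
      p = 2 ∨ p = q)
    {r : ℕ} (hr5 : 5 ≤ r) (hrodd : r % 2 = 1) (hrq : r ≤ q) : RepN S r 0 := by
  haveI : IsDomain (Localization S) := loc_domain h0
  set ι := algebraMap ℤ (Localization S) with hι
  have h2n : ¬IsUnit (ι ((2:ℕ):ℤ)) := by simpa using h2
  have hirr2 : Irreducible (ι (2:ℤ)) := by
    have h := (prime_iota (S := S) h0 Nat.prime_two h2n).irreducible
    simpa using h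
  have hirrq : Irreducible (ι ((q:ℕ):ℤ)) := (prime_iota (S := S) h0 hq hqn).irreducible
  have hirrm2 : Irreducible (-ι (2:ℤ)) := by
    have := (irreducible_isUnit_mul isUnit_one.neg).2 hirr2
    simpa using this
  have hqodd : q % 2 = 1 := by
    obtain ⟨k, hk⟩ := hq.odd_of_ne_two hq2; omega
  set m : ℤ := (q:ℤ) - r + 3 with hm
  have hmodd : m % 2 = 1 := by omega
  have hmpos : 0 < m := by omega
  have hmlt : m < (q:ℤ) := by omega
  have hmu : IsUnit (ι m) := by
    refine isUnit_of_prime_divisors m.natAbs m rfl (by omega) ?_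
    intro p pp hdvd
    by_contra hnu
    rcases hall p pp hnu with rfl | rfl
    · obtain ⟨c, hc⟩ := hdvd; omega
    · have := Int.le_of_dvd hmpos hdvd
      omega
  have hmneg : IsUnit (ι (-m)) := by
    have : ι (-m) = - ι m := by rw [map_neg]
    rw [this]; exact hmu.neg
  have hA3 : Irreducible (ι (2:ℤ) * ι (-m)) := (irreducible_mul_isUnit hmneg).2 hirr2
  have hrep := (((RepN.single hirrq).add (RepN.single hirrq)).add (RepN.single hA3)).add
    (RepN.nsmul hirrm2 (r - 3))
  refine (hrep.congr_val ?_).congr_card (by omega)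
  have hcast : (((r-3 : ℕ)) : Localization S) = ι (((r-3:ℕ)):ℤ) := (map_natCast ι _).symm
  rw [hcast, ← map_neg, ← map_mul, ← map_mul, ← map_add, ← map_add, ← map_add]
  have hr3 : (((r-3:ℕ)):ℤ) = (r:ℤ) - 3 := by omega
  have : ((q:ℕ):ℤ) + ((q:ℕ):ℤ) + 2 * (-m) + (((r-3:ℕ)):ℤ) * (-2) = 0 := by
    rw [hr3]; omega
  rw [this, map_zero]
theorem all_even_contra (h0 : (0:ℤ) ∉ S)
    (h2 : ¬IsUnit (algebraMap ℤ (Localization S) (2:ℤ)))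
    (hall : ∀ p : ℕ, p.Prime → ¬IsUnit (algebraMap ℤ (Localization S) ((p:ℕ):ℤ)) → p = 2)
    {r j : ℕ} (hj : r = 2*j+3)
    (hrep : RepN S r (algebraMap ℤ (Localization S) (4:ℤ))) : False := by
  set ι := algebraMap ℤ (Localization S) with hι
  have h2n : ¬IsUnit (ι ((2:ℕ):ℤ)) := by simpa using h2
  obtain ⟨f, hf, hsum⟩ := hrep
  have hcl : ∀ i, ∃ u, IsUnit u ∧ f i = ι (2:ℤ) * u := by
    intro i
    obtain ⟨p, u, pp, pnu, hu, hfe⟩ := atom_classify h0 (hf i)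
    have hp2 : p = 2 := hall p pp pnu
    subst hp2
    exact ⟨u, hu, by simpa using hfe⟩
  choose u hu hfu using hcl
  have h8 : (4 : ZMod 8) = ∑ i, psi8 h0 h2n (f i) := by
    have h := congrArg (psi8 h0 h2n) hsum
    rw [map_sum] at h
    rw [← h, psi8_iota]
    norm_num
  have hterm : ∀ i, ∃ c : ZMod 8, psi8 h0 h2n (f i) = 2*(2*c+1) := by
    intro i
    obtain ⟨c, hc⟩ := psi8_unit_odd h0 h2n (hu i)
    refine ⟨c, ?_⟩
    rw [hfu i, map_mul, psi8_iota, hc]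
    norm_num
  choose c hc using hterm
  obtain ⟨C, hC⟩ := sum_odd r (fun i => 2*(c i)+1) (fun i => ⟨c i, rfl⟩)
  have hfin : (4:ZMod 8) = 2*(2*C + (r:ZMod 8)) := by
    rw [h8]
    calc ∑ i, psi8 h0 h2n (f i) = ∑ i, 2*(2*(c i)+1) :=
          Finset.sum_congr rfl (fun i _ => hc i)
      _ = 2 * ∑ i, (2*(c i)+1) := by rw [Finset.mul_sum]
      _ = 2*(2*C + (r:ZMod 8)) := by rw [hC]
  have hrc : (r : ZMod 8) = 2*(j:ZMod 8)+3 := by rw [hj]; push_cast; ring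
  rw [hrc] at hfin
  exact zmod8_contra 0 C j (by rw [← hfin]; ring)

theorem single_q_contra (h0 : (0:ℤ) ∉ S)
    (h2 : ¬IsUnit (algebraMap ℤ (Localization S) (2:ℤ)))
    {q : ℕ} (hq : q.Prime) (hq2 : q ≠ 2)
    (hqn : ¬IsUnit (algebraMap ℤ (Localization S) ((q:ℕ):ℤ)))
    (hall : ∀ p : ℕ, p.Prime → ¬IsUnit (algebraMap ℤ (Localization S) ((p:ℕ):ℤ)) →
      p = 2 ∨ p = q)
    (hrep : RepN S 3 (algebraMap ℤ (Localization S) ((4*q : ℕ):ℤ))) : False := by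
  set ι := algebraMap ℤ (Localization S) with hι
  have h2n : ¬IsUnit (ι ((2:ℕ):ℤ)) := by simpa using h2
  haveI : Fact q.Prime := ⟨hq⟩
  have hq3 : 3 ≤ q := by
    have h2le := hq.two_le
    rcases Nat.lt_or_ge q 3 with h | h
    · interval_cases q
      · exact absurd rfl hq2
    · exact h
  obtain ⟨k, hk⟩ := hq.odd_of_ne_two hq2
  obtain ⟨f, hf, hsum⟩ := hrep
  rw [Fin.sum_univ_three] at hsum
  have hcl : ∀ i, ∃ u, IsUnit u ∧ (f i = ι (2:ℤ) * u ∨ f i = ι ((q:ℕ):ℤ) * u) := by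
    intro i
    obtain ⟨p, u, pp, pnu, hu, hfe⟩ := atom_classify h0 (hf i)
    rcases hall p pp pnu with hp | hp
    · subst hp; exact ⟨u, hu, Or.inl (by simpa using hfe)⟩
    · subst hp; exact ⟨u, hu, Or.inr hfe⟩
  choose u hu hty using hcl
  have hψ2 : ∀ i, f i = ι (2:ℤ) * u i → psi2 h0 h2n (f i) = 0 := by
    intro i he
    rw [he, map_mul, psi2_iota]
    have h22 : ((2:ℤ) : ZMod 2) = 0 := by decide
    rw [h22, zero_mul]
  have hψq : ∀ i, f i = ι ((q:ℕ):ℤ) * u i → psi2 h0 h2n (f i) = 1 := by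
    intro i he
    rw [he, map_mul, psi2_iota, psi2_unit_one h0 h2n (hu i), mul_one]
    rw [hk]
    push_cast
    have h22 : (2 : ZMod 2) = 0 := by decide
    rw [h22]
    ring
  have hψL : psi2 h0 h2n (ι ((4*q:ℕ):ℤ)) = 0 := by
    rw [psi2_iota, ZMod.intCast_zmod_eq_zero_iff_dvd]
    exact ⟨(2*q : ℕ), by push_cast; ring⟩
  have hχ2 : ∀ i, f i = ι (2:ℤ) * u i →
      psiq h0 hq hqn (f i) = 2 * psiq h0 hq hqn (u i) := by
    intro i he
    rw [he, map_mul, psiq_iota]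
    norm_num
  have hχq : ∀ i, f i = ι ((q:ℕ):ℤ) * u i → psiq h0 hq hqn (f i) = 0 := by
    intro i he
    rw [he, map_mul, psiq_iota]
    have hz : (((q:ℕ):ℤ) : ZMod q) = 0 := by
      rw [ZMod.intCast_zmod_eq_zero_iff_dvd]
    rw [hz, zero_mul]
  have hχL : psiq h0 hq hqn (ι ((4*q:ℕ):ℤ)) = 0 := by
    rw [psiq_iota, ZMod.intCast_zmod_eq_zero_iff_dvd]
    exact ⟨4, by push_cast; ring⟩
  have hχu : ∀ i, psiq h0 hq hqn (u i) ≠ 0 := fun i => psiq_unit_ne h0 hq hqn (hu i)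
  have h2q : (2 : ZMod q) ≠ 0 := by
    intro h
    have h' : ((2:ℕ) : ZMod q) = 0 := by exact_mod_cast h
    rw [ZMod.natCast_eq_zero_iff] at h'
    have := Nat.le_of_dvd (by norm_num) h'
    omega
  have hψ₈2 : ∀ i, f i = ι (2:ℤ) * u i → ∃ c : ZMod 8, psi8 h0 h2n (f i) = 2*(2*c+1) := by
    intro i he
    obtain ⟨c, hc⟩ := psi8_unit_odd h0 h2n (hu i)
    refine ⟨c, ?_⟩
    rw [he, map_mul, psi8_iota, hc]
    norm_num
  have hψ₈L : psi8 h0 h2n (ι ((4*q:ℕ):ℤ)) = 4*(2*(k:ZMod 8)+1) := by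
    rw [psi8_iota, hk]
    push_cast
    ring
  rcases hty 0 with ht0 | ht0 <;> rcases hty 1 with ht1 | ht1 <;> rcases hty 2 with ht2 | ht2
  · obtain ⟨a, ha⟩ := hψ₈2 0 ht0
    obtain ⟨b, hb⟩ := hψ₈2 1 ht1
    obtain ⟨c, hc⟩ := hψ₈2 2 ht2
    have h := congrArg (psi8 h0 h2n) hsum
    rw [map_add, map_add, ha, hb, hc, hψ₈L] at h
    exact zmod8_contra3 k a b c h
  · have h := congrArg (psi2 h0 h2n) hsum
    rw [map_add, map_add, hψ2 0 ht0, hψ2 1 ht1, hψq 2 ht2, hψL] at h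
    exact absurd h (by decide)
  · have h := congrArg (psi2 h0 h2n) hsum
    rw [map_add, map_add, hψ2 0 ht0, hψq 1 ht1, hψ2 2 ht2, hψL] at h
    exact absurd h (by decide)
  · have h := congrArg (psiq h0 hq hqn) hsum
    rw [map_add, map_add, hχ2 0 ht0, hχq 1 ht1, hχq 2 ht2, hχL] at h
    have hz : (2:ZMod q) * psiq h0 hq hqn (u 0) = 0 := by linear_combination -h
    exact (mul_ne_zero h2q (hχu 0)) hz
  · have h := congrArg (psi2 h0 h2n) hsum
    rw [map_add, map_add, hψq 0 ht0, hψ2 1 ht1, hψ2 2 ht2, hψL] at h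
    exact absurd h (by decide)
  · have h := congrArg (psiq h0 hq hqn) hsum
    rw [map_add, map_add, hχq 0 ht0, hχ2 1 ht1, hχq 2 ht2, hχL] at h
    have hz : (2:ZMod q) * psiq h0 hq hqn (u 1) = 0 := by linear_combination -h
    exact (mul_ne_zero h2q (hχu 1)) hz
  · have h := congrArg (psiq h0 hq hqn) hsum
    rw [map_add, map_add, hχq 0 ht0, hχq 1 ht1, hχ2 2 ht2, hχL] at h
    have hz : (2:ZMod q) * psiq h0 hq hqn (u 2) = 0 := by linear_combination -h
    exact (mul_ne_zero h2q (hχu 2)) hz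
  · have h := congrArg (psi2 h0 h2n) hsum
    rw [map_add, map_add, hψq 0 ht0, hψq 1 ht1, hψq 2 ht2, hψL] at h
    exact absurd h (by decide)
theorem stmt_6 (S : Submonoid ℤ) (h0 : (0 : ℤ) ∉ S)
    (hne : (S : Set ℤ) ≠ {1, -1}) (hs : ∃ s ∈ S, (1 : ℤ) < s)
    (r : ℕ) (n : ℕ) (hn : 0 < n)
    (φ : Localization S →+* ℚ)
    (hyp : ∀ w : Localization S, (n : ℚ) < φ w →
      ∃ f : Fin r → Localization S, (∀ i, Irreducible (f i)) ∧ w = ∑ i, f i) :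
    ∀ w : Localization S,
      ∃ f : Fin r → Localization S, (∀ i, Irreducible (f i)) ∧ w = ∑ i, f i := by
  obtain ⟨s, hsS, hs1⟩ := hs
  have hyp' : ∀ x : Localization S, (n:ℚ) < φ x → RepN S r x := hyp
  have hrepnz : ∀ w : Localization S, w ≠ 0 → RepN S r w :=
    fun w hw => rep_of_ne_zero φ hsS hs1 hyp' hw
  intro w
  by_cases hw : w = 0
  · subst hw
    show RepN S r 0
    rcases Nat.eq_zero_or_pos r with hr0 | hrpos
    · exfalso; subst hr0; exact r_zero_contra φ hyp'
    obtain ⟨π, hπ⟩ := exists_atom φ hrpos hyp'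
    rcases Nat.even_or_odd r with he | ho
    · obtain ⟨j, hj⟩ := he
      exact (RepN.pairs hπ j).congr_card (by omega)
    · obtain ⟨jj, hjj⟩ := ho
      rcases Nat.eq_zero_or_pos jj with hjj0 | hjjpos
      · exfalso
        have hr1 : r = 1 := by omega
        subst hr1
        exact r_one_contra φ hyp'
      · have hj3 : r = 2*(jj-1)+3 := by omega
        set j := jj - 1 with hjdef
        by_cases h2 : IsUnit (algebraMap ℤ (Localization S) (2:ℤ))
        · exact (rep_zero_two_unit h2 hπ j).congr_card hj3.symm
        · by_cases hoddbad : ∃ p : ℕ, p.Prime ∧ p ≠ 2 ∧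
              ¬IsUnit (algebraMap ℤ (Localization S) ((p:ℕ):ℤ))
          · classical
            obtain ⟨q₁, hq₁p, hq₁2, hq₁n⟩ := hoddbad
            -- replace q₁ by the least such prime
            have hex : ∃ m : ℕ, m.Prime ∧ m ≠ 2 ∧
                ¬IsUnit (algebraMap ℤ (Localization S) ((m:ℕ):ℤ)) := ⟨q₁, hq₁p, hq₁2, hq₁n⟩
            clear hq₁p hq₁2 hq₁n
            set Q₁ := Nat.find hex with hQ₁
            obtain ⟨hQ₁p, hQ₁2, hQ₁n⟩ := Nat.find_spec hex
            have hmin₁ : ∀ m : ℕ, m.Prime → m ≠ 2 →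
                ¬IsUnit (algebraMap ℤ (Localization S) ((m:ℕ):ℤ)) → Q₁ ≤ m :=
              fun m h1 h2' h3 => Nat.find_min' hex ⟨h1, h2', h3⟩
            by_cases hsecond : ∃ m : ℕ, (m.Prime ∧ m ≠ 2 ∧
                ¬IsUnit (algebraMap ℤ (Localization S) ((m:ℕ):ℤ))) ∧ m ≠ Q₁
            · obtain ⟨q₂', hq₂'⟩ := hsecond
              have hex2 : ∃ m : ℕ, (m.Prime ∧ m ≠ 2 ∧
                  ¬IsUnit (algebraMap ℤ (Localization S) ((m:ℕ):ℤ))) ∧ m ≠ Q₁ := ⟨q₂', hq₂'⟩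
              clear hq₂'
              set Q₂ := Nat.find hex2 with hQ₂
              obtain ⟨⟨hQ₂p, hQ₂2, hQ₂n⟩, hQ₂ne⟩ := Nat.find_spec hex2
              have hmin₂ : ∀ m : ℕ, (m.Prime ∧ m ≠ 2 ∧
                  ¬IsUnit (algebraMap ℤ (Localization S) ((m:ℕ):ℤ))) → m ≠ Q₁ → Q₂ ≤ m :=
                fun m h1 h2' => Nat.find_min' hex2 ⟨h1, h2'⟩
              have hlt : Q₁ < Q₂ :=
                lt_of_le_of_ne (hmin₁ _ hQ₂p hQ₂2 hQ₂n) (fun h => hQ₂ne h.symm)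
              have hminbig : ∀ p : ℕ, p.Prime → p ≠ 2 →
                  ¬IsUnit (algebraMap ℤ (Localization S) ((p:ℕ):ℤ)) → (p = Q₁ ∨ Q₂ ≤ p) := by
                intro p pp p2 pn
                by_cases hpq : p = Q₁
                · exact Or.inl hpq
                · exact Or.inr (hmin₂ p ⟨pp, p2, pn⟩ hpq)
              exact (rep_zero_two_odd h0 h2 hQ₁p hQ₂p hQ₁2 hQ₂2 hQ₁n hQ₂n hlt hminbig
                j).congr_card hj3.symm
            · have hall : ∀ p : ℕ, p.Prime →
                  ¬IsUnit (algebraMap ℤ (Localization S) ((p:ℕ):ℤ)) → p = 2 ∨ p = Q₁ := by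
                intro p pp pn
                by_cases hp2 : p = 2
                · exact Or.inl hp2
                · right
                  by_contra hne'
                  exact hsecond ⟨p, ⟨pp, hp2, pn⟩, hne'⟩
              have hQ₁odd : Q₁ % 2 = 1 := by
                obtain ⟨k, hk⟩ := hQ₁p.odd_of_ne_two hQ₁2; omega
              have hQ₁3 : 3 ≤ Q₁ := by
                have := hQ₁p.two_le; omega
              rcases Nat.eq_zero_or_pos j with hj0' | hj5
              · exfalso
                have hr3 : r = 3 := by omega
                apply single_q_contra h0 h2 hQ₁p hQ₁2 hQ₁n hall
                refine (hrepnz _ ?_).congr_card hr3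
                intro hz
                have h4 : ((4*Q₁ : ℕ):ℤ) = 0 := iota_inj h0 (by rw [hz, map_zero])
                have : (4*Q₁ : ℕ) = 0 := by exact_mod_cast h4
                omega
              · rcases le_or_gt (Q₁ + 2) r with hsmall | hlarge
                · exact rep_zero_single_small h0 h2 hQ₁p hQ₁2 hQ₁n hsmall (by omega)
                · have hge : r ≤ Q₁ := by omega
                  exact rep_zero_single_large h0 h2 hQ₁p hQ₁2 hQ₁n hall (by omega) (by omega)
                    hge
          · exfalso
            have hall : ∀ p : ℕ, p.Prime →
                ¬IsUnit (algebraMap ℤ (Localization S) ((p:ℕ):ℤ)) → p = 2 := by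
              intro p pp pn
              by_contra hp2
              exact hoddbad ⟨p, pp, hp2, pn⟩
            apply all_even_contra h0 h2 hall hj3 (hrepnz _ ?_)
            intro hz
            have h4 : (4:ℤ) = 0 := iota_inj h0 (by rw [hz, map_zero])
            norm_num at h4
  · exact hrepnz w hw
end

section
/- Let R be a UFD and S a multiplicative subset of R generated by prime elements. If H ∈ R is irreducible and not associated to any prime generating S, and A ∈ S, then H/A is an irreducible element of S⁻¹R. -/
/-!
A prime `q` of `R` that divides none of the generators of `S` divides no element of `S`,
so `(q)` is a prime ideal disjoint from `S` and `q` stays prime in `S⁻¹R`. In a UFD the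
irreducible `H` is such a prime, and `H / A` is an associate of `H / 1`.
-/

theorem Prime.not_dvd_of_mem_closure {M : Type*} [CommMonoidWithZero M] {P : Set M} {q : M}
    (hq : Prime q) (hqP : ∀ p ∈ P, ¬ q ∣ p) {s : M} (hs : s ∈ Submonoid.closure P) :
    ¬ q ∣ s := by
  induction hs using Submonoid.closure_induction with
  | mem p hp => exact hqP p hp
  | one => exact hq.not_dvd_one
  | mul a b _ _ ha hb => exact fun h ↦ (hq.dvd_or_dvd h).elim ha hb

theorem Prime.algebraMap_of_isLocalization {R S : Type*} [CommRing R] [IsDomain R] [CommRing S]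
    [Algebra R S] (M : Submonoid R) [IsLocalization M S] {q : R} (hq : Prime q)
    (hqM : ∀ m ∈ M, ¬ q ∣ m) : Prime (algebraMap R S q) := by
  have hM : M ≤ nonZeroDivisors R := fun m hm ↦
    mem_nonZeroDivisors_of_ne_zero fun h ↦ hqM m hm (h ▸ dvd_zero q)
  have hne : algebraMap R S q ≠ 0 :=
    (map_ne_zero_iff _ (IsLocalization.injective S hM)).mpr hq.ne_zero
  have hdisj : Disjoint (M : Set R) (Ideal.span {q}) :=
    Set.disjoint_left.mpr fun m hm hmq ↦ hqM m hm (Ideal.mem_span_singleton.mp hmq)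
  have hprime := IsLocalization.isPrime_of_isPrime_disjoint M S _
    ((Ideal.span_singleton_prime hq.ne_zero).mpr hq) hdisj
  rw [Ideal.map_span, Set.image_singleton] at hprime
  exact (Ideal.span_singleton_prime hne).mp hprime

theorem IsLocalization.associated_mk'_algebraMap {R S : Type*} [CommRing R] [CommRing S]
    [Algebra R S] {M : Submonoid R} [IsLocalization M S] (x : R) (y : M) :
    Associated (IsLocalization.mk' S x y) (algebraMap R S x) :=
  ⟨(IsLocalization.map_units S y).unit, IsLocalization.mk'_spec S x y⟩

theorem stmt_8 {R : Type*} [CommRing R] [IsDomain R] [UniqueFactorizationMonoid R]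
    (P : Set R) (hP : ∀ p ∈ P, Prime p)
    (H : R) (hH : Irreducible H) (hass : ∀ p ∈ P, ¬ Associated H p)
    (A : R) (hA : A ∈ Submonoid.closure P) :
    Irreducible (Localization.mk H (⟨A, hA⟩ : Submonoid.closure P)) := by
  have hHprime : Prime H := hH.prime
  have hHP : ∀ p ∈ P, ¬ H ∣ p := fun p hp hdvd ↦
    hass p hp (hH.associated_of_dvd (hP p hp).irreducible hdvd)
  have hHS : ∀ s ∈ Submonoid.closure P, ¬ H ∣ s := fun _ hs ↦
    hHprime.not_dvd_of_mem_closure hHP hs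
  rw [Localization.mk_eq_mk']
  exact ((IsLocalization.associated_mk'_algebraMap H _).symm.prime
    (hHprime.algebraMap_of_isLocalization _ hHS)).irreducible
end

section
/- Let Q be an integral polytope contained in an affine hyperplane H of ℝⁿ with vertex set {v₁,…,v_r}, and let v be an integral point not in H. Then the convex hull of {v₁,…,v_r,v} is integrally indecomposable if and only if gcd of all coordinates of the vectors v − v₁, …, v − v_r equals 1. -/
open Pointwise

/-- A set in `ℝⁿ` is an integral polytope if it is the convex hull of a nonempty
finite set of integral points. -/
def IsIntegralPolytope {n : ℕ} (C : Set (Fin n → ℝ)) : Prop :=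
  ∃ F : Finset (Fin n → ℤ), F.Nonempty ∧
    C = convexHull ℝ ((fun v : Fin n → ℤ => fun j => (v j : ℝ)) '' (F : Set (Fin n → ℤ)))

/-- An integral polytope is integrally decomposable if it is the Minkowski sum of two
integral polytopes, each having at least two points. -/
def IntegrallyDecomposable {n : ℕ} (C : Set (Fin n → ℝ)) : Prop :=
  ∃ A B : Set (Fin n → ℝ), IsIntegralPolytope A ∧ IsIntegralPolytope B ∧
    A.Nontrivial ∧ B.Nontrivial ∧ C = A + B

/-!
Let `P = conv (Q ∪ {w})` be the pyramid with base `Q ⊆ {φ = c}` and apex `w`, `φ w > c`, and let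
`d` be the gcd of the coordinates of the vectors `w - vᵢ`.

If `d > 1`, then `P` is the Minkowski sum of its homothetic copies of ratio `1 - 1/d` about `w`
and of ratio `1/d` about `w` translated by `-w`; both are spanned by integral points because `d`
divides every `w - vᵢ`.

Conversely, let `P = A + B` with `A`, `B` integral and nontrivial. The `φ`-maximal points
`a ∈ A`, `b ∈ B` add up to the apex and the `φ`-minimal values add up to `c`. A vertex `v` of `Q`
is a vertex of `P`, so `v = x + y` with `x` a vertex of `A`, hence integral. Every horizontal
slice of `P` is a homothetic copy of `Q`; comparing the slices through `x + b` and `a + y` shows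
`a - x = s • (w - v)` for one `s ∈ (0, 1)`, the relative height of `A`. Thus `s` times every
coordinate of every `w - vᵢ` is an integer, so `s * d ∈ ℤ` by Bézout, impossible when `d = 1`.
-/

open Set

section Minkowski

variable {E : Type*} [AddCommGroup E] [Module ℝ E]

theorem mem_extremePoints_of_add_mem_extremePoints {A B : Set E} {x y : E} (hx : x ∈ A)
    (hy : y ∈ B) (h : x + y ∈ (A + B).extremePoints ℝ) : x ∈ A.extremePoints ℝ := by
  refine ⟨hx, fun x₁ hx₁ x₂ hx₂ hseg => add_right_cancel (h.2 (add_mem_add hx₁ hy)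
    (add_mem_add hx₂ hy) ?_)⟩
  simpa only [add_comm _ y] using (mem_openSegment_translate ℝ y).2 hseg

theorem isMaxOn_add {f : E →ₗ[ℝ] ℝ} {A B : Set E} {a b : E} (ha : IsMaxOn f A a)
    (hb : IsMaxOn f B b) : IsMaxOn f (A + B) (a + b) := by
  rintro _ ⟨x, hx, y, hy, rfl⟩
  simpa only [mem_ofPred_eq, map_add] using add_le_add (ha hx) (hb hy)

theorem isMinOn_add {f : E →ₗ[ℝ] ℝ} {A B : Set E} {a b : E} (ha : IsMinOn f A a)
    (hb : IsMinOn f B b) : IsMinOn f (A + B) (a + b) := by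
  rintro _ ⟨x, hx, y, hy, rfl⟩
  simpa only [mem_ofPred_eq, map_add] using add_le_add (ha hx) (hb hy)

theorem exists_apply_lt_of_nontrivial_of_add {f : E →ₗ[ℝ] ℝ} {A B : Set E} {a b : E}
    (hA : A.Nontrivial) (hb : b ∈ B) (hmax : IsMaxOn f (A + B) (a + b))
    (huniq : ∀ z ∈ A + B, f z = f (a + b) → z = a + b) : ∃ x ∈ A, f x < f a := by
  obtain ⟨x, hx, hxa⟩ := hA.exists_ne a
  have hxb : x + b ∈ A + B := add_mem_add hx hb
  have hle : f (x + b) ≤ f (a + b) := hmax hxb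
  have hne : f (x + b) ≠ f (a + b) := fun h => hxa (add_right_cancel (huniq _ hxb h))
  rw [map_add, map_add] at hle hne
  exact ⟨x, hx, (add_lt_add_iff_right _).1 (hle.lt_of_ne hne)⟩

theorem Set.Finite.exists_isMaxOn_convexHull {S : Set E} (hS : S.Finite) (hne : S.Nonempty)
    (f : E →ₗ[ℝ] ℝ) : ∃ a ∈ S, IsMaxOn f (convexHull ℝ S) a := by
  obtain ⟨a, ha, hmax⟩ := S.exists_max_image f hS hne
  exact ⟨a, ha, fun _ hx => convexHull_min hmax (convex_halfSpace_le f.isLinear (f a)) hx⟩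

theorem Set.Finite.exists_isMinOn_convexHull {S : Set E} (hS : S.Finite) (hne : S.Nonempty)
    (f : E →ₗ[ℝ] ℝ) : ∃ a ∈ S, IsMinOn f (convexHull ℝ S) a := by
  obtain ⟨a, ha, hmin⟩ := S.exists_min_image f hS hne
  exact ⟨a, ha, fun _ hx => convexHull_min hmin (convex_halfSpace_ge f.isLinear (f a)) hx⟩

theorem Convex.homothety_image_add_image {P : Set E} (hP : Convex ℝ P) (w : E) {t : ℝ}
    (ht₀ : 0 ≤ t) (ht₁ : t ≤ 1) :
    AffineMap.homothety w (1 - t) '' P + (t • (AffineMap.id ℝ E - AffineMap.const ℝ E w)) '' P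
      = P := by
  have hsum : ∀ p q, AffineMap.homothety w (1 - t) p
      + (t • (AffineMap.id ℝ E - AffineMap.const ℝ E w)) q = (1 - t) • p + t • q := by
    intro p q
    simp only [AffineMap.homothety_apply, vsub_eq_sub, vadd_eq_add, AffineMap.coe_smul,
      AffineMap.coe_sub, AffineMap.coe_id, AffineMap.coe_const, Pi.smul_apply, Pi.sub_apply,
      id_eq, Function.const_apply]
    module
  ext x
  constructor
  · intro hx
    obtain ⟨_, ⟨p, hp, rfl⟩, _, ⟨q, hq, rfl⟩, rfl⟩ := mem_add.1 hx
    rw [hsum]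
    exact hP hp hq (sub_nonneg.2 ht₁) ht₀ (sub_add_cancel 1 t)
  · intro hx
    refine ⟨_, ⟨x, hx, rfl⟩, _, ⟨x, hx, rfl⟩, (hsum x x).trans ?_⟩
    rw [← add_smul, sub_add_cancel, one_smul]

end Minkowski

section Pyramid

variable {E : Type*} [AddCommGroup E] [Module ℝ E] {T : Set E} {w : E} {φ : E →ₗ[ℝ] ℝ} {c : ℝ}

theorem exists_eq_smul_add_smul_of_mem_convexHull_union_singleton (hT : T.Nonempty) {x : E}
    (hx : x ∈ convexHull ℝ (T ∪ {w})) :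
    ∃ θ : ℝ, 0 ≤ θ ∧ θ ≤ 1 ∧ ∃ q ∈ convexHull ℝ T, x = θ • w + (1 - θ) • q := by
  rw [union_singleton, convexHull_insert hT, mem_convexJoin] at hx
  obtain ⟨_, rfl, q, hq, θ, μ, hθ, hμ, hsum, rfl⟩ := hx
  exact ⟨θ, hθ, by linarith, q, hq, by rw [← hsum, add_sub_cancel_left]⟩

theorem apply_eq_of_mem_convexHull (hTφ : ∀ y ∈ T, φ y = c) {q : E}
    (hq : q ∈ convexHull ℝ T) : φ q = c :=
  convexHull_min hTφ (convex_hyperplane φ.isLinear c) hq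

theorem apply_mem_Icc_of_mem_convexHull_union_singleton (hTφ : ∀ y ∈ T, φ y = c)
    (hw : c ≤ φ w) {x : E} (hx : x ∈ convexHull ℝ (T ∪ {w})) : φ x ∈ Icc c (φ w) := by
  refine convexHull_min ?_ ((convex_Icc c (φ w)).linear_preimage φ) hx
  rintro y (hy | rfl)
  · exact ⟨(hTφ y hy).ge, (hTφ y hy).trans_le hw⟩
  · exact ⟨hw, le_rfl⟩

theorem exists_eq_smul_add_smul_of_apply_eq (hT : T.Nonempty) (hTφ : ∀ y ∈ T, φ y = c)
    (hw : φ w ≠ c) {x : E} (hx : x ∈ convexHull ℝ (T ∪ {w})) {θ : ℝ}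
    (hθ : φ x = c + θ * (φ w - c)) : ∃ q ∈ convexHull ℝ T, x = θ • w + (1 - θ) • q := by
  obtain ⟨θ', -, -, q, hq, rfl⟩ := exists_eq_smul_add_smul_of_mem_convexHull_union_singleton hT hx
  have hθ' : θ' = θ := by
    simp only [map_add, map_smul, smul_eq_mul, apply_eq_of_mem_convexHull hTφ hq] at hθ
    exact mul_right_cancel₀ (sub_ne_zero.2 hw) (by linarith)
  exact ⟨q, hq, by rw [hθ']⟩

theorem eq_of_mem_convexHull_union_singleton_of_apply_eq (hT : T.Nonempty)
    (hTφ : ∀ y ∈ T, φ y = c) (hw : φ w ≠ c) {x : E} (hx : x ∈ convexHull ℝ (T ∪ {w}))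
    (hxw : φ x = φ w) : x = w := by
  obtain ⟨q, -, rfl⟩ :=
    exists_eq_smul_add_smul_of_apply_eq hT hTφ hw hx (θ := 1) (by rw [hxw]; ring)
  simp

theorem isExtreme_convexHull_union_singleton (hT : T.Nonempty) (hTφ : ∀ y ∈ T, φ y = c)
    (hw : c < φ w) : IsExtreme ℝ (convexHull ℝ (T ∪ {w})) (convexHull ℝ T) := by
  refine ⟨convexHull_mono subset_union_left, fun x₁ hx₁ x₂ hx₂ x hx hseg => ?_⟩
  have hbase : ∀ y ∈ convexHull ℝ (T ∪ {w}), φ y = c → y ∈ convexHull ℝ T := fun y hy hyc => by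
    obtain ⟨q, hq, rfl⟩ := exists_eq_smul_add_smul_of_apply_eq hT hTφ hw.ne' hy (θ := 0)
      (by rw [hyc]; ring)
    simpa using hq
  obtain ⟨t₁, t₂, ht₁, ht₂, ht, rfl⟩ := hseg
  have hxc := apply_eq_of_mem_convexHull hTφ hx
  rw [map_add, map_smul, map_smul, smul_eq_mul, smul_eq_mul] at hxc
  have h₁ := (apply_mem_Icc_of_mem_convexHull_union_singleton hTφ hw.le hx₁).1
  have h₂ := (apply_mem_Icc_of_mem_convexHull_union_singleton hTφ hw.le hx₂).1
  have hsum : t₁ * (φ x₁ - c) + t₂ * (φ x₂ - c) = 0 := by linear_combination hxc - c * ht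
  have h₁₀ : t₁ * (φ x₁ - c) = 0 := by
    linarith [mul_nonneg ht₁.le (sub_nonneg.2 h₁), mul_nonneg ht₂.le (sub_nonneg.2 h₂)]
  exact hbase x₁ hx₁ (sub_eq_zero.1 ((mul_eq_zero.1 h₁₀).resolve_left ht₁.ne'))

theorem eq_smul_add_smul_of_add_eq (hT : T.Nonempty) (hTφ : ∀ y ∈ T, φ y = c) (hw : φ w ≠ c)
    {v : E} (hv : v ∈ (convexHull ℝ T).extremePoints ℝ) {x₁ x₂ : E}
    (hx₁ : x₁ ∈ convexHull ℝ (T ∪ {w})) (hx₂ : x₂ ∈ convexHull ℝ (T ∪ {w}))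
    (hsum : x₁ + x₂ = v + w) {θ : ℝ} (hθ₀ : 0 < θ) (hθ₁ : θ < 1)
    (hθ : φ x₁ = c + θ * (φ w - c)) : x₁ = θ • w + (1 - θ) • v := by
  have hφ₂ : φ x₂ = c + (1 - θ) * (φ w - c) := by
    have := congrArg φ hsum
    rw [map_add, map_add, apply_eq_of_mem_convexHull hTφ hv.1] at this
    linarith
  obtain ⟨q₁, hq₁, rfl⟩ := exists_eq_smul_add_smul_of_apply_eq hT hTφ hw hx₁ hθ
  obtain ⟨q₂, hq₂, rfl⟩ := exists_eq_smul_add_smul_of_apply_eq hT hTφ hw hx₂ hφ₂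
  have hv_eq : (1 - θ) • q₁ + θ • q₂ = v := by
    linear_combination (norm := module) hsum
  rw [hv.2 hq₁ hq₂ ⟨1 - θ, θ, by linarith, hθ₀, by ring, hv_eq⟩]

theorem add_eq_of_convexHull_union_singleton_eq_add (hT : T.Nonempty)
    (hTφ : ∀ y ∈ T, φ y = c) (hw : c < φ w) {A B : Set E}
    (hP : convexHull ℝ (T ∪ {w}) = A + B) {a b : E} (haA : a ∈ A) (hbB : b ∈ B)
    (ha : IsMaxOn φ A a) (hb : IsMaxOn φ B b) : a + b = w := by
  have habP : a + b ∈ convexHull ℝ (T ∪ {w}) := hP ▸ add_mem_add haA hbB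
  have hwP : w ∈ A + B := hP ▸ subset_convexHull ℝ _ (mem_union_right T rfl)
  exact eq_of_mem_convexHull_union_singleton_of_apply_eq hT hTφ hw.ne' habP <|
    le_antisymm (apply_mem_Icc_of_mem_convexHull_union_singleton hTφ hw.le habP).2
      (isMaxOn_add ha hb hwP)

theorem apply_add_apply_eq_of_convexHull_union_singleton_eq_add (hT : T.Nonempty)
    (hTφ : ∀ y ∈ T, φ y = c) (hw : c ≤ φ w) {A B : Set E}
    (hP : convexHull ℝ (T ∪ {w}) = A + B) {a b : E} (haA : a ∈ A) (hbB : b ∈ B)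
    (ha : IsMinOn φ A a) (hb : IsMinOn φ B b) : φ a + φ b = c := by
  obtain ⟨v, hv⟩ := hT
  have habP : a + b ∈ convexHull ℝ (T ∪ {w}) := hP ▸ add_mem_add haA hbB
  have hvP : v ∈ A + B := hP ▸ subset_convexHull ℝ _ (mem_union_left _ hv)
  have hle : φ (a + b) ≤ φ v := isMinOn_add ha hb hvP
  have hge := (apply_mem_Icc_of_mem_convexHull_union_singleton hTφ hw habP).1
  rw [map_add] at hle hge
  linarith [hTφ v hv]

theorem div_mem_Ioo_of_convexHull_union_singleton_eq_add (hT : T.Nonempty)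
    (hTφ : ∀ y ∈ T, φ y = c) (hw : c < φ w) {A B : Set E}
    (hP : convexHull ℝ (T ∪ {w}) = A + B) (hA : A.Nontrivial) (hB : B.Nontrivial)
    {a b a₀ b₀ : E} (haA : a ∈ A) (hbB : b ∈ B) (ha₀A : a₀ ∈ A) (hb₀B : b₀ ∈ B)
    (ha : IsMaxOn φ A a) (hb : IsMaxOn φ B b) (ha₀ : IsMinOn φ A a₀) (hb₀ : IsMinOn φ B b₀) :
    (φ a - φ a₀) / (φ w - c) ∈ Ioo 0 1 := by
  have hab := add_eq_of_convexHull_union_singleton_eq_add hT hTφ hw hP haA hbB ha hb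
  have hab₀ := apply_add_apply_eq_of_convexHull_union_singleton_eq_add hT hTφ hw.le hP
    ha₀A hb₀B ha₀ hb₀
  have hφab : φ a + φ b = φ w := by rw [← hab, map_add]
  have huniq : ∀ z ∈ A + B, φ z = φ (a + b) → z = a + b := fun z hz hzφ => by
    rw [hab] at hzφ ⊢
    exact eq_of_mem_convexHull_union_singleton_of_apply_eq hT hTφ hw.ne' (hP ▸ hz) hzφ
  obtain ⟨x, hx, hxa⟩ := exists_apply_lt_of_nontrivial_of_add hA hbB (isMaxOn_add ha hb) huniq
  obtain ⟨y, hy, hyb⟩ := exists_apply_lt_of_nontrivial_of_add (A := B) (B := A) hB haA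
    (by rw [add_comm B, add_comm b]; exact isMaxOn_add ha hb)
    (by rw [add_comm B, add_comm b]; exact huniq)
  have hxa₀ : φ a₀ ≤ φ x := ha₀ hx
  have hyb₀ : φ b₀ ≤ φ y := hb₀ hy
  have hh : 0 < φ w - c := sub_pos.2 hw
  exact ⟨div_pos (by linarith) hh, (div_lt_one hh).2 (by linarith)⟩

theorem sub_eq_smul_sub_of_convexHull_union_singleton_eq_add (hT : T.Nonempty)
    (hTφ : ∀ y ∈ T, φ y = c) (hw : c < φ w) {A B : Set E}
    (hP : convexHull ℝ (T ∪ {w}) = A + B) {a b x y v : E} (haA : a ∈ A) (hbB : b ∈ B)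
    (hx : x ∈ A) (hy : y ∈ B) (hab : a + b = w) (hxy : x + y = v)
    (hv : v ∈ (convexHull ℝ T).extremePoints ℝ) {s : ℝ} (hs₀ : 0 < s) (hs₁ : s < 1)
    (hs : φ a - φ x = s * (φ w - c)) : a - x = s • (w - v) := by
  have hφab : φ a + φ b = φ w := by rw [← hab, map_add]
  -- `x + b` lies on the slice of the pyramid at relative height `1 - s`
  have hslice := eq_smul_add_smul_of_add_eq hT hTφ hw.ne' hv (θ := 1 - s)
    (hP ▸ add_mem_add hx hbB) (hP ▸ add_mem_add haA hy) (by rw [← hab, ← hxy]; abel)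
    (by linarith) (by linarith) (by rw [map_add]; linarith)
  linear_combination (norm := module) hab - hslice

theorem exists_smul_sub_mem_of_convexHull_union_singleton_eq_add (Λ : AddSubgroup E)
    (hT : T.Nonempty) (hTφ : ∀ y ∈ T, φ y = c) (hw : φ w ≠ c) {SA SB : Set E}
    (hSA : SA.Finite) (hSAΛ : SA ⊆ Λ) (hSB : SB.Finite) (hA : (convexHull ℝ SA).Nontrivial)
    (hB : (convexHull ℝ SB).Nontrivial)
    (hP : convexHull ℝ (T ∪ {w}) = convexHull ℝ SA + convexHull ℝ SB) :
    ∃ s : ℝ, 0 < s ∧ s < 1 ∧ ∀ v ∈ (convexHull ℝ T).extremePoints ℝ, s • (w - v) ∈ Λ := by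
  wlog hlt : c < φ w generalizing φ c with H
  · exact H (φ := -φ) (c := -c) (by simpa using hTφ) (by simpa using hw)
      (by simpa using lt_of_le_of_ne (not_lt.1 hlt) hw)
  set A := convexHull ℝ SA
  set B := convexHull ℝ SB
  have hSAne : SA.Nonempty := convexHull_nonempty_iff.1 hA.nonempty
  have hSBne : SB.Nonempty := convexHull_nonempty_iff.1 hB.nonempty
  obtain ⟨a, haS, ha⟩ := hSA.exists_isMaxOn_convexHull hSAne φ
  obtain ⟨b, hbS, hb⟩ := hSB.exists_isMaxOn_convexHull hSBne φ
  obtain ⟨a₀, ha₀S, ha₀⟩ := hSA.exists_isMinOn_convexHull hSAne φ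
  obtain ⟨b₀, hb₀S, hb₀⟩ := hSB.exists_isMinOn_convexHull hSBne φ
  have haA : a ∈ A := subset_convexHull ℝ SA haS
  have hbB : b ∈ B := subset_convexHull ℝ SB hbS
  have ha₀A : a₀ ∈ A := subset_convexHull ℝ SA ha₀S
  have hb₀B : b₀ ∈ B := subset_convexHull ℝ SB hb₀S
  have hab := add_eq_of_convexHull_union_singleton_eq_add hT hTφ hlt hP haA hbB ha hb
  have hab₀ := apply_add_apply_eq_of_convexHull_union_singleton_eq_add hT hTφ hlt.le hP
    ha₀A hb₀B ha₀ hb₀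
  set s := (φ a - φ a₀) / (φ w - c)
  obtain ⟨hs₀, hs₁⟩ := div_mem_Ioo_of_convexHull_union_singleton_eq_add hT hTφ hlt hP hA hB
    haA hbB ha₀A hb₀B ha hb ha₀ hb₀
  have hsh : s * (φ w - c) = φ a - φ a₀ := div_mul_cancel₀ _ (sub_pos.2 hlt).ne'
  refine ⟨s, hs₀, hs₁, fun v hv => ?_⟩
  have hext := isExtreme_convexHull_union_singleton hT hTφ hlt
  obtain ⟨x, hx, y, hy, hxy⟩ := mem_add.1 (hP ▸ hext.subset hv.1 : v ∈ A + B)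
  have hx_ext : x ∈ A.extremePoints ℝ := mem_extremePoints_of_add_mem_extremePoints hx hy
    (hxy ▸ hP ▸ hext.extremePoints_subset_extremePoints hv)
  have hφx : φ x = φ a₀ := by
    have hv_c := apply_eq_of_mem_convexHull hTφ hv.1
    have hxa₀ : φ a₀ ≤ φ x := ha₀ hx
    have hyb₀ : φ b₀ ≤ φ y := hb₀ hy
    rw [← hxy, map_add] at hv_c
    linarith
  rw [← sub_eq_smul_sub_of_convexHull_union_singleton_eq_add hT hTφ hlt hP haA hbB hx hy hab hxy
    hv hs₀ hs₁ (by rw [hφx, hsh])]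
  exact Λ.sub_mem (hSAΛ haS) (hSAΛ (extremePoints_convexHull_subset hx_ext))

end Pyramid

section IntegerLattice

variable {n : ℕ}

def intLattice (n : ℕ) : AddSubgroup (Fin n → ℝ) := ((Int.castAddHom ℝ).compLeft (Fin n)).range

theorem intCast_mem_intLattice (z : Fin n → ℤ) : (fun j => (z j : ℝ)) ∈ intLattice n := ⟨z, rfl⟩

theorem isIntegralPolytope_iff {C : Set (Fin n → ℝ)} :
    IsIntegralPolytope C ↔
      ∃ S : Set (Fin n → ℝ), S.Finite ∧ S.Nonempty ∧ S ⊆ intLattice n ∧ C = convexHull ℝ S := by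
  constructor
  · rintro ⟨F, hF, rfl⟩
    exact ⟨_, F.finite_toSet.image _, hF.to_set.image _,
      by rintro _ ⟨z, -, rfl⟩; exact intCast_mem_intLattice z, rfl⟩
  · rintro ⟨S, hS, hne, hSL, rfl⟩
    obtain ⟨F, rfl⟩ := subset_range_iff_exists_image_eq.1 hSL
    have hinj : Function.Injective fun (z : Fin n → ℤ) (j : Fin n) => (z j : ℝ) :=
      fun z z' h => funext fun j => Int.cast_injective (congrFun h j)
    have hF : F.Finite := hS.of_finite_image hinj.injOn
    exact ⟨hF.toFinset, by simpa using hne, by rw [hF.coe_toFinset]; rfl⟩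

theorem integrallyDecomposable_convexHull_of_smul_sub_mem {S : Set (Fin n → ℝ)} (hS : S.Finite)
    (hSL : S ⊆ intLattice n) (hSnt : S.Nontrivial) {w : Fin n → ℝ} {t : ℝ}
    (ht₀ : 0 < t) (ht₁ : t < 1) (hdiv : ∀ x ∈ S, t • (w - x) ∈ intLattice n) :
    IntegrallyDecomposable (convexHull ℝ S) := by
  set f := AffineMap.homothety w (1 - t)
  set g := t • (AffineMap.id ℝ (Fin n → ℝ) - AffineMap.const ℝ (Fin n → ℝ) w)
  have hf : ∀ x, f x = x + t • (w - x) := fun x => by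
    simp only [f, AffineMap.homothety_apply, vsub_eq_sub, vadd_eq_add]
    module
  have hg : ∀ x, g x = -(t • (w - x)) := fun x => by
    simp only [g, AffineMap.coe_smul, AffineMap.coe_sub, AffineMap.coe_id, AffineMap.coe_const,
      Pi.smul_apply, Pi.sub_apply, id_eq, Function.const_apply]
    module
  have hf_inj : Function.Injective f := AffineMap.homothety_injective w (sub_ne_zero.2 ht₁.ne')
  have hg_inj : Function.Injective g := fun x y h => by
    rw [hg, hg, neg_inj] at h
    simpa using smul_right_injective _ ht₀.ne' h
  refine ⟨f '' convexHull ℝ S, g '' convexHull ℝ S, ?_, ?_,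
    (hSnt.image hf_inj).mono (image_mono (subset_convexHull ℝ S)),
    (hSnt.image hg_inj).mono (image_mono (subset_convexHull ℝ S)),
    ((convex_convexHull ℝ S).homothety_image_add_image w ht₀.le ht₁.le).symm⟩
  · refine isIntegralPolytope_iff.2 ⟨f '' S, hS.image f, hSnt.nonempty.image f, ?_,
      f.image_convexHull S⟩
    rintro _ ⟨x, hx, rfl⟩
    rw [hf]
    exact add_mem (hSL hx) (hdiv x hx)
  · refine isIntegralPolytope_iff.2 ⟨g '' S, hS.image g, hSnt.nonempty.image g, ?_,
      g.image_convexHull S⟩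
    rintro _ ⟨x, hx, rfl⟩
    rw [hg]
    exact neg_mem (hdiv x hx)

theorem exists_int_eq_mul_gcd {ι : Type*} (F : Finset ι) (f : ι → ℤ) {s : ℝ}
    (h : ∀ i ∈ F, ∃ k : ℤ, s * f i = k) : ∃ k : ℤ, s * (F.gcd f : ℤ) = k := by
  obtain ⟨g, hg⟩ := F.gcd_eq_sum_mul f
  choose! k hk using h
  refine ⟨∑ i ∈ F, k i * g i, ?_⟩
  rw [hg]
  push_cast
  rw [Finset.mul_sum]
  exact Finset.sum_congr rfl fun i hi => by rw [← mul_assoc, hk i hi]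

theorem integrallyDecomposable_convexHull_range_union_singleton {ι : Type*} [Fintype ι]
    (v : ι → Fin n → ℤ) (w : Fin n → ℤ)
    (hd₀ : Finset.univ.gcd (fun q : ι × Fin n => w q.2 - v q.1 q.2) ≠ 0)
    (hd₁ : Finset.univ.gcd (fun q : ι × Fin n => w q.2 - v q.1 q.2) ≠ 1) :
    IntegrallyDecomposable
      (convexHull ℝ (range (fun i j => (v i j : ℝ)) ∪ {fun j => (w j : ℝ)})) := by
  set d := Finset.univ.gcd (fun q : ι × Fin n => w q.2 - v q.1 q.2)
  have hd : (2 : ℝ) ≤ d := by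
    have : 0 ≤ d := Int.nonneg_of_normalize_eq_self Finset.normalize_gcd
    exact_mod_cast (show 2 ≤ d by omega)
  obtain ⟨⟨i, j⟩, -, hij⟩ := not_forall₂.1 (mt Finset.gcd_eq_zero_iff.2 hd₀)
  refine integrallyDecomposable_convexHull_of_smul_sub_mem
    ((finite_range _).union (finite_singleton _)) ?_
    ⟨_, mem_union_left _ (mem_range_self i), _, mem_union_right _ rfl, ?_⟩
    (w := fun j => (w j : ℝ)) (t := (d : ℝ)⁻¹) (by positivity)
    (inv_lt_one_of_one_lt₀ (by linarith)) ?_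
  · rintro _ (⟨i, rfl⟩ | rfl) <;> exact intCast_mem_intLattice _
  · intro h
    exact hij (sub_eq_zero.2 (by exact_mod_cast (congrFun h j).symm))
  · rintro _ (⟨i, rfl⟩ | rfl)
    · refine ⟨fun j => (w j - v i j) / d, funext fun j => ?_⟩
      have hdvd : d ∣ w j - v i j := Finset.gcd_dvd (Finset.mem_univ (i, j))
      simp only [AddMonoidHom.compLeft_apply, Function.comp_apply, Int.coe_castAddHom,
        Int.cast_div (α := ℝ) hdvd (Int.cast_ne_zero.2 hd₀), Int.cast_sub, Pi.smul_apply,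
        Pi.sub_apply, smul_eq_mul]
      ring
    · simp

theorem not_integrallyDecomposable_convexHull_range_union_singleton {ι : Type*} [Fintype ι]
    [Nonempty ι] (v : ι → Fin n → ℤ) (w : Fin n → ℤ) {φ : (Fin n → ℝ) →ₗ[ℝ] ℝ} {c : ℝ}
    (hvφ : ∀ i, φ (fun j => (v i j : ℝ)) = c) (hw : φ (fun j => (w j : ℝ)) ≠ c)
    (hvert : ∀ i, (fun j => (v i j : ℝ)) ∈
      (convexHull ℝ (range fun i j => (v i j : ℝ))).extremePoints ℝ)
    (hgcd : Finset.univ.gcd (fun q : ι × Fin n => w q.2 - v q.1 q.2) = 1) :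
    ¬ IntegrallyDecomposable
      (convexHull ℝ (range (fun i j => (v i j : ℝ)) ∪ {fun j => (w j : ℝ)})) := by
  rintro ⟨A, B, hA, hB, hAnt, hBnt, hP⟩
  obtain ⟨SA, hSA, -, hSAL, rfl⟩ := isIntegralPolytope_iff.1 hA
  obtain ⟨SB, hSB, -, -, rfl⟩ := isIntegralPolytope_iff.1 hB
  obtain ⟨s, hs₀, hs₁, hs⟩ := exists_smul_sub_mem_of_convexHull_union_singleton_eq_add
    (intLattice n) (range_nonempty _) (forall_mem_range.2 hvφ) hw hSA hSAL hSB hAnt hBnt hP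
  obtain ⟨k, hk⟩ := exists_int_eq_mul_gcd Finset.univ (fun q : ι × Fin n => w q.2 - v q.1 q.2)
    (s := s) fun ⟨i, j⟩ _ => by
      obtain ⟨z, hz⟩ := hs _ (hvert i)
      refine ⟨z j, ?_⟩
      simpa [mul_sub] using (congrFun hz j).symm
  rw [hgcd, Int.cast_one, mul_one] at hk
  have hk₀ : (0 : ℤ) < k := by exact_mod_cast hk ▸ hs₀
  have hk₁ : k < 1 := by exact_mod_cast hk ▸ hs₁
  omega

end IntegerLattice

theorem stmt_12 (n r : ℕ) (hr : 0 < r) (v : Fin r → (Fin n → ℤ)) (w : Fin n → ℤ)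
    (vr : Fin r → (Fin n → ℝ)) (hvr : vr = fun i j => (v i j : ℝ))
    (wr : Fin n → ℝ) (hwr : wr = fun j => (w j : ℝ))
    (Q : Set (Fin n → ℝ)) (hQ : Q = convexHull ℝ (Set.range vr))
    (hvert : Set.range vr = Set.extremePoints ℝ Q)
    (φ : (Fin n → ℝ) →ₗ[ℝ] ℝ) (c : ℝ)
    (hQH : ∀ i, φ (vr i) = c) (hwH : φ wr ≠ c) :
    ¬ IntegrallyDecomposable (convexHull ℝ (Set.range vr ∪ {wr})) ↔
      Finset.univ.gcd (fun q : Fin r × Fin n => w q.2 - v q.1 q.2) = 1 := by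
  subst hvr hwr hQ
  have : Nonempty (Fin r) := ⟨⟨0, hr⟩⟩
  refine ⟨fun hind => ?_, not_integrallyDecomposable_convexHull_range_union_singleton v w hQH hwH
    fun i => hvert ▸ mem_range_self i⟩
  by_contra hgcd
  refine hind (integrallyDecomposable_convexHull_range_union_singleton v w (fun h₀ => hwH ?_) hgcd)
  have hwv : w = v ⟨0, hr⟩ := funext fun j =>
    sub_eq_zero.1 (Finset.gcd_eq_zero_iff.1 h₀ (⟨0, hr⟩, j) (Finset.mem_univ _))
  rw [hwv]
  exact hQH _
end

section
/- Let K be a field and a, b ∈ ℕ with gcd(a,b) = 1 and (a,b) ≠ (0,0). Then the polynomial x^a y^b − 1 ∈ K[x,y] is irreducible. -/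
/-!
Regard `x ^ a * y ^ b - 1` as a polynomial in `y` over `K[x]`. Its constant term is `-1`, so
it is primitive and, by Gauss's lemma, it suffices that `x ^ a * (y ^ b - x⁻¹ ^ a)` be
irreducible over `K(x)`. When `b` is odd, Capelli's criterion reduces this to `x⁻¹ ^ a` not
being a `p`-th power for any prime `p ∣ b`; comparing degrees of rational functions, that would
force `p ∣ a`. Since `a` and `b` are coprime, one of them is odd, and the roles of `x` and `y`
are symmetric.
-/

open Polynomial

theorem Nat.Coprime.odd_or_odd {a b : ℕ} (h : a.Coprime b) : Odd a ∨ Odd b := by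
  by_contra! hab
  simp only [Nat.not_odd_iff_even] at hab
  have : 2 ∣ a.gcd b := Nat.dvd_gcd hab.1.two_dvd hab.2.two_dvd
  rw [h] at this
  omega

namespace RatFunc

variable {K : Type*} [Field K]

theorem intDegree_pow (x : RatFunc K) (n : ℕ) : (x ^ n).intDegree = n * x.intDegree := by
  rcases eq_or_ne x 0 with rfl | hx
  · cases n <;> simp
  induction n with
  | zero => simp
  | succ n ih => rw [pow_succ, intDegree_mul (pow_ne_zero n hx) hx, ih]; push_cast; ring

theorem pow_ne_inv_X_pow {p b : ℕ} (h : ¬ p ∣ b) (u : RatFunc K) : u ^ p ≠ (X ^ b)⁻¹ := by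
  intro hu
  have hdeg := congrArg intDegree hu
  rw [intDegree_pow, intDegree_inv, intDegree_pow, intDegree_X, mul_one] at hdeg
  exact h (Int.natCast_dvd_natCast.mp ⟨-u.intDegree, by linarith⟩)

end RatFunc

theorem irreducible_C_X_pow_mul_X_pow_sub_one {K : Type*} [Field K] {a b : ℕ} (hb : Odd b)
    (hab : a.Coprime b) : Irreducible (C (X ^ a) * X ^ b - 1 : K[X][X]) := by
  have hb0 : b ≠ 0 := by rintro rfl; simp at hb
  have hprim : (C (X ^ a) * X ^ b - 1 : K[X][X]).IsPrimitive := fun r hr ↦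
    isUnit_of_dvd_unit ((C_dvd_iff_dvd_coeff _ _).1 hr 0) (by simp [coeff_X_pow, hb0.symm])
  set c : RatFunc K := RatFunc.X ^ a
  have hc : c ≠ 0 := pow_ne_zero _ RatFunc.X_ne_zero
  have hmap : (C (X ^ a) * X ^ b - 1 : K[X][X]).map (algebraMap K[X] (RatFunc K)) =
      C c * (X ^ b - C c⁻¹) := by
    rw [mul_sub, ← C_mul, mul_inv_cancel₀ hc, C_1]
    simp [c]
  have hirr : Irreducible (X ^ b - C c⁻¹ : (RatFunc K)[X]) :=
    X_pow_sub_C_irreducible_of_odd hb fun p hp hpb ↦ RatFunc.pow_ne_inv_X_pow fun hpa ↦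
      hp.one_lt.ne' (Nat.eq_one_of_dvd_coprimes hab hpa hpb)
  refine hprim.irreducible_of_irreducible_map_of_injective (RatFunc.algebraMap_injective K) ?_
  rw [hmap]
  exact (irreducible_isUnit_mul (isUnit_C.mpr hc.isUnit)).mpr hirr

namespace MvPolynomial

variable {K : Type*} [Field K]

theorem irreducible_X_zero_pow_mul_X_one_pow_sub_one_of_odd {a b : ℕ} (hb : Odd b)
    (hab : a.Coprime b) : Irreducible (X 0 ^ a * X 1 ^ b - 1 : MvPolynomial (Fin 2) K) := by
  simpa using (MulEquiv.irreducible_iff (Bivariate.equivMvPolynomial K).toMulEquiv).2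
    (irreducible_C_X_pow_mul_X_pow_sub_one hb hab)

theorem irreducible_X_zero_pow_mul_X_one_pow_sub_one_comm {a b : ℕ} :
    Irreducible (X 0 ^ a * X 1 ^ b - 1 : MvPolynomial (Fin 2) K) ↔
      Irreducible (X 0 ^ b * X 1 ^ a - 1 : MvPolynomial (Fin 2) K) := by
  rw [← MulEquiv.irreducible_iff (renameEquiv K (Equiv.swap 0 1)).toMulEquiv]
  simp [mul_comm]

end MvPolynomial

theorem stmt_13_general (K : Type*) [Field K] (a b : ℕ) (hgcd : Nat.gcd a b = 1) :
    Irreducible ((MvPolynomial.X 0) ^ a * (MvPolynomial.X 1) ^ b - 1 :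
      MvPolynomial (Fin 2) K) := by
  rcases Nat.Coprime.odd_or_odd hgcd with ha | hb
  · exact MvPolynomial.irreducible_X_zero_pow_mul_X_one_pow_sub_one_comm.2
      (MvPolynomial.irreducible_X_zero_pow_mul_X_one_pow_sub_one_of_odd ha
        (Nat.Coprime.symm hgcd))
  · exact MvPolynomial.irreducible_X_zero_pow_mul_X_one_pow_sub_one_of_odd hb hgcd

theorem stmt_13 (K : Type*) [Field K] (a b : ℕ) (hgcd : Nat.gcd a b = 1)
    (hab : ¬ (a = 0 ∧ b = 0)) :
    Irreducible ((MvPolynomial.X 0) ^ a * (MvPolynomial.X 1) ^ b - 1 :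
      MvPolynomial (Fin 2) K) :=
  stmt_13_general K a b hgcd
end

section
/- Let K be an algebraically closed field, n ≥ 1, and let A = K[x,y]/(xⁿy − 1). Then A is isomorphic as a K-algebra to the Laurent polynomial ring K[x, x⁻¹], and A does not satisfy the Strong Goldbach Condition (there exists an element of A not expressible as a sum of two irreducible elements). -/
/-!
Sending `x ↦ T` and `y ↦ T⁻ⁿ` identifies `K[x, y] ⧸ (xⁿy - 1)` with `K[T, T⁻¹]`; the inverse sends
`T` to `x`, which is a unit because `xⁿy = 1`.

Every nonzero Laurent polynomial is `p · Tᵐ` with `p ∈ K[X]` not divisible by `X`. If it is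
irreducible, so is `p` in `K[X]`: a factor of `p` is prime to `X`, and such a polynomial becomes a
unit in `K[T, T⁻¹]` only if it divides a power of `X`, i.e. is constant. Over an algebraically
closed field `p` is then linear, so an irreducible Laurent polynomial has at most two terms, a sum
of two irreducibles at most four, and `1 + T + T² + T³ + T⁴` is not such a sum.
-/

open Polynomial LaurentPolynomial

namespace LaurentPolynomial

variable {R : Type*}

theorem card_support_mul_T [Semiring R] (f : R[T;T⁻¹]) (m : ℤ) :
    (f * T m).coeff.support.card = f.coeff.support.card := by
  rw [T, AddMonoidAlgebra.support_coeff_mul_single _ _ (by simp), Finset.card_map]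

theorem algHom_ext_T_one [CommSemiring R] {A : Type*} [Semiring A] [Algebra R A]
    ⦃φ₁ φ₂ : R[T;T⁻¹] →ₐ[R] A⦄ (h : φ₁ (T 1) = φ₂ (T 1)) : φ₁ = φ₂ := by
  have inv_mul : ∀ φ : R[T;T⁻¹] →ₐ[R] A, φ (T (-1)) * φ (T 1) = 1 := fun φ ↦ by
    rw [← map_mul, ← T_add, neg_add_cancel, T_zero, map_one]
  have mul_inv : φ₂ (T 1) * φ₂ (T (-1)) = 1 := by
    rw [← map_mul, ← T_add, add_neg_cancel, T_zero, map_one]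
  have h_neg : φ₁ (T (-1)) = φ₂ (T (-1)) :=
    left_inv_eq_right_inv (h ▸ inv_mul φ₁) mul_inv
  refine AddMonoidAlgebra.algHom_ext (fun m ↦ ?_) (Subsingleton.elim _ _)
  change φ₁ (T m) = φ₂ (T m)
  induction m using Int.induction_on with
  | zero => rw [T_zero, map_one, map_one]
  | succ i ih => rw [T_add, map_mul, map_mul, ih, h]
  | pred i ih => rw [sub_eq_add_neg, T_add, map_mul, map_mul, ih, h_neg]

theorem exists_eq_toLaurent_mul_T [CommRing R] {f : R[T;T⁻¹]} (hf : f ≠ 0) :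
    ∃ (p : R[X]) (m : ℤ), ¬ X ∣ p ∧ f = toLaurent p * T m := by
  obtain ⟨N, f', hf'⟩ := exists_T_pow f
  have hf'0 : f' ≠ 0 := by
    rintro rfl
    exact hf ((isUnit_T _).mul_left_eq_zero.mp (by rw [← hf', map_zero]))
  obtain ⟨p, hf'p, hp⟩ := f'.exists_eq_pow_rootMultiplicity_mul_and_not_dvd hf'0 0
  rw [map_zero, sub_zero] at hf'p hp
  refine ⟨p, f'.rootMultiplicity 0 - N, hp, ?_⟩
  rw [T_sub, ← mul_assoc, ← toLaurent_X_pow, ← map_mul, mul_comm p, ← hf'p, hf', mul_T_assoc,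
    add_neg_cancel, T_zero, mul_one]

end LaurentPolynomial

namespace Polynomial

variable {R : Type*} [CommRing R] [IsDomain R] {p : R[X]}

theorem isUnit_of_isUnit_toLaurent (hp : ¬ X ∣ p) (h : IsUnit (toLaurent p)) : IsUnit p := by
  obtain ⟨q, hq⟩ := h.exists_right_inv
  obtain ⟨M, q', hq'⟩ := exists_T_pow q
  have hdvd : p ∣ X ^ M := ⟨q', toLaurent_injective (by
    rw [map_mul, hq', ← mul_assoc, hq, one_mul, toLaurent_X_pow])⟩
  obtain ⟨i, -, hassoc⟩ := (dvd_prime_pow prime_X M).mp hdvd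
  rcases i with _ | i
  · simpa using hassoc.isUnit_iff.mpr isUnit_one
  · exact absurd ((dvd_pow_self X i.succ_ne_zero).trans hassoc.symm.dvd) hp

theorem irreducible_of_irreducible_toLaurent (hp : ¬ X ∣ p) (h : Irreducible (toLaurent p)) :
    Irreducible p where
  not_isUnit hu := h.not_isUnit (hu.map _)
  isUnit_or_isUnit a b hab := by
    have not_X_dvd {c : R[X]} (hc : c ∣ p) : ¬ X ∣ c := fun hX ↦ hp (hX.trans hc)
    refine (h.isUnit_or_isUnit (by rw [hab, map_mul])).imp ?_ ?_
    · exact isUnit_of_isUnit_toLaurent (not_X_dvd ⟨b, hab⟩)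
    · exact isUnit_of_isUnit_toLaurent (not_X_dvd ⟨a, by rw [hab, mul_comm]⟩)

end Polynomial

namespace LaurentPolynomial

theorem support_sum_T {R : Type*} [Semiring R] [Nontrivial R] (s : Finset ℤ) :
    (∑ i ∈ s, T i : R[T;T⁻¹]).coeff.support = s := by
  ext k
  simp [AddMonoidAlgebra.coeff_sum, Finset.sum_apply']

variable {K : Type*} [Field K] [IsAlgClosed K]

theorem card_support_le_two_of_irreducible {f : K[T;T⁻¹]} (hf : Irreducible f) :
    f.coeff.support.card ≤ 2 := by
  obtain ⟨p, m, hp, rfl⟩ := exists_eq_toLaurent_mul_T hf.ne_zero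
  have hp_irr : Irreducible p :=
    irreducible_of_irreducible_toLaurent hp ((irreducible_mul_isUnit (isUnit_T m)).mp hf)
  have hdeg : p.natDegree = 1 :=
    natDegree_eq_of_degree_eq_some (IsAlgClosed.degree_eq_one_of_irreducible K hp_irr)
  calc (toLaurent p * T m).coeff.support.card
      = p.support.card := by rw [card_support_mul_T, support_coeff_toLaurent, Finset.card_map]
    _ ≤ (Finset.range (p.natDegree + 1)).card :=
        Finset.card_le_card supp_subset_range_natDegree_succ
    _ = 2 := by rw [Finset.card_range, hdeg]

theorem not_exists_irreducible_add_eq_of_four_lt_card_support {f : K[T;T⁻¹]}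
    (hf : 4 < f.coeff.support.card) : ¬ ∃ g h, Irreducible g ∧ Irreducible h ∧ f = g + h := by
  rintro ⟨g, h, hg, hh, rfl⟩
  have : (g + h).coeff.support.card ≤ 2 + 2 :=
    calc (g + h).coeff.support.card
        ≤ g.coeff.support.card + h.coeff.support.card := by
          rw [AddMonoidAlgebra.coeff_add]
          exact (Finset.card_le_card Finsupp.support_add).trans (Finset.card_union_le _ _)
      _ ≤ 2 + 2 := add_le_add (card_support_le_two_of_irreducible hg)
          (card_support_le_two_of_irreducible hh)
  omega

end LaurentPolynomial

section Quotient

variable (R : Type*) [CommRing R] (n : ℕ)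

noncomputable abbrev laurentIdeal : Ideal (MvPolynomial (Fin 2) R) :=
  Ideal.span {MvPolynomial.X 0 ^ n * MvPolynomial.X 1 - 1}

local notation "x" => Ideal.Quotient.mk (laurentIdeal R n) (MvPolynomial.X 0)

theorem aeval_X_zero_pow_mul_X_one_sub_one :
    MvPolynomial.aeval ![(T 1 : R[T;T⁻¹]), T (-n)]
      (MvPolynomial.X 0 ^ n * MvPolynomial.X 1 - 1 : MvPolynomial (Fin 2) R) = 0 := by
  rw [map_sub, map_mul, map_pow, MvPolynomial.aeval_X, MvPolynomial.aeval_X, map_one,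
    Matrix.cons_val_zero, Matrix.cons_val_one, Matrix.cons_val_zero, T_pow, mul_one, ← T_add,
    add_neg_cancel, T_zero, sub_self]

noncomputable def quotientToLaurent : MvPolynomial (Fin 2) R ⧸ laurentIdeal R n →ₐ[R] R[T;T⁻¹] :=
  Ideal.Quotient.liftₐ _ (MvPolynomial.aeval ![T 1, T (-n)]) fun a ha ↦ by
    obtain ⟨c, rfl⟩ := Ideal.mem_span_singleton'.mp ha
    rw [map_mul, aeval_X_zero_pow_mul_X_one_sub_one, mul_zero]

@[simp]
theorem quotientToLaurent_mk (p : MvPolynomial (Fin 2) R) :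
    quotientToLaurent R n (Ideal.Quotient.mk _ p) = MvPolynomial.aeval ![T 1, T (-n)] p :=
  rfl

local notation "y" => Ideal.Quotient.mk (laurentIdeal R n) (MvPolynomial.X 1)

theorem mk_X_zero_pow_mul_mk_X_one : x ^ n * y = 1 := by
  rw [← map_pow, ← map_mul, ← map_one (Ideal.Quotient.mk _), Ideal.Quotient.eq]
  exact Ideal.subset_span rfl

variable {n}

theorem isUnit_mk_X_zero (hn : 0 < n) : IsUnit x :=
  (isUnit_pow_iff hn.ne').mp (IsUnit.of_mul_eq_one _ (mk_X_zero_pow_mul_mk_X_one R n))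

noncomputable def laurentToQuotient (hn : 0 < n) :
    R[T;T⁻¹] →ₐ[R] MvPolynomial (Fin 2) R ⧸ laurentIdeal R n :=
  AddMonoidAlgebra.lift R _ ℤ ((Units.coeHom _).comp (zpowersHom _ (isUnit_mk_X_zero R hn).unit))

theorem laurentToQuotient_T (hn : 0 < n) (k : ℤ) :
    laurentToQuotient R hn (T k) = ↑((isUnit_mk_X_zero R hn).unit ^ k) := by
  rw [laurentToQuotient, T, AddMonoidAlgebra.lift_single, one_smul]
  rfl

theorem laurentToQuotient_T_one (hn : 0 < n) : laurentToQuotient R hn (T 1) = x := by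
  rw [laurentToQuotient_T, zpow_one, IsUnit.unit_spec]

theorem laurentToQuotient_T_neg (hn : 0 < n) : laurentToQuotient R hn (T (-n)) = y := by
  rw [laurentToQuotient_T, zpow_neg, zpow_natCast]
  refine (Units.eq_inv_of_mul_eq_one_left ?_).symm
  rw [Units.val_pow_eq_pow_val, IsUnit.unit_spec, mk_X_zero_pow_mul_mk_X_one]

noncomputable def quotientEquivLaurent (hn : 0 < n) :
    (MvPolynomial (Fin 2) R ⧸ laurentIdeal R n) ≃ₐ[R] R[T;T⁻¹] :=
  AlgEquiv.ofAlgHom (quotientToLaurent R n) (laurentToQuotient R hn)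
    (algHom_ext_T_one (by simp [laurentToQuotient_T_one]))
    (Ideal.Quotient.algHom_ext _ <| MvPolynomial.algHom_ext fun i ↦ by
      fin_cases i
      · simp [laurentToQuotient_T_one]
      · simp [laurentToQuotient_T_neg])

end Quotient

theorem stmt_17 (K : Type*) [Field K] [IsAlgClosed K] (n : ℕ) (hn : 1 ≤ n) :
    Nonempty ((MvPolynomial (Fin 2) K ⧸
        Ideal.span {((MvPolynomial.X 0) ^ n * MvPolynomial.X 1 - 1 : MvPolynomial (Fin 2) K)})
      ≃ₐ[K] LaurentPolynomial K) ∧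
    ∃ a : MvPolynomial (Fin 2) K ⧸
        Ideal.span {((MvPolynomial.X 0) ^ n * MvPolynomial.X 1 - 1 : MvPolynomial (Fin 2) K)},
      ¬ ∃ g h, Irreducible g ∧ Irreducible h ∧ a = g + h := by
  let e := quotientEquivLaurent K hn
  refine ⟨⟨e⟩, e.symm (∑ i ∈ Finset.Ico 0 5, T i), ?_⟩
  rintro ⟨g, h, hg, hh, hgh⟩
  have four_lt_card : 4 < (∑ i ∈ Finset.Ico (0 : ℤ) 5, T i : K[T;T⁻¹]).coeff.support.card := by
    rw [support_sum_T]
    simp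
  refine not_exists_irreducible_add_eq_of_four_lt_card_support four_lt_card
    ⟨e g, e h, hg.map e, hh.map e, ?_⟩
  rw [← map_add, ← hgh, AlgEquiv.apply_symm_apply]
end
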